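/- arXiv:2012.05086 — 12 statements merged into one kernel-verified Lean document; each statement's English description precedes it below -/
import Mathlib

section
/- Let N ≥ 1 and let T = [t_{kj}] ∈ ℂ^{N×N} be an invertible lower-triangular matrix. Let δ > 0 satisfy |t_{kk}| ≥ δ for all k, and let ρ ≥ 0 satisfy |t_{kj}| ≤ ρ·|t_{kk}| for all j < k. Then the Frobenius norm of the inverse satisfies ‖T⁻¹‖_F ≤ (1/((ρ+2)·δ)) · √((ρ+1)^{2N} + 2N(ρ+2) − 1). -/
/-! Write `S = T⁻¹`; it is again lower triangular, and row `k` of `T * S = 1` reads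
`t_kk s_kj = [k = j] - ∑_{i<k} t_ki s_ij`. Hence `|s_kk| = 1/|t_kk| ≤ 1/δ`, and below the
diagonal `|s_kj| ≤ ρ ∑_{j ≤ i < k} |s_ij|`. Run down a column, this discrete Grönwall
recursion makes the partial column sums grow at most like `(ρ+1)^d / δ`, so
`|s_kj| ≤ (ρ/δ) (ρ+1)^(k-j-1)`. Summing the squares of these bounds is a double geometric sum,
which evaluates exactly to `((ρ+1)^(2N) + 2N(ρ+2) - 1) / ((ρ+2)δ)^2`. -/

open Finset

theorem Finset.sum_eq_add_sum_Iio_of_forall_gt_eq_zero {ι M : Type*} [LinearOrder ι] [Fintype ι]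
    [LocallyFiniteOrderBot ι] [AddCommMonoid M] {f : ι → M} {k : ι}
    (hf : ∀ j, k < j → f j = 0) : ∑ j, f j = f k + ∑ j ∈ Iio k, f j := by
  rw [← sum_subset (subset_univ (Iic k)) fun j _ hj => hf j (not_le.mp (by simpa using hj)),
    Iic_eq_cons_Iio, sum_cons]

namespace Matrix.IsLowerTriangular

variable {m : Type*} [Fintype m] [LinearOrder m]

theorem mul_apply_eq_add_sum_Iio [LocallyFiniteOrderBot m] {R : Type*}
    [NonUnitalNonAssocSemiring R] {T : Matrix m m R} (hT : T.IsLowerTriangular)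
    (S : Matrix m m R) (k j : m) :
    (T * S) k j = T k k * S k j + ∑ i ∈ Iio k, T k i * S i j := by
  rw [Matrix.mul_apply]
  exact sum_eq_add_sum_Iio_of_forall_gt_eq_zero fun i hi => by rw [hT hi, zero_mul]

variable [DecidableEq m] {R : Type*} [CommRing R] {T : Matrix m m R}

theorem isUnit_det (hT : T.IsLowerTriangular) (hdiag : ∀ k, IsUnit (T k k)) :
    IsUnit T.det := by
  rw [det_of_isLowerTriangular T hT]
  exact IsUnit.prod_univ_iff.mpr hdiag

theorem inv (hT : T.IsLowerTriangular) : T⁻¹.IsLowerTriangular := by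
  by_cases hdet : IsUnit T.det
  · let := T.invertibleOfIsUnitDet hdet
    exact blockTriangular_inv_of_blockTriangular hT
  · rw [nonsing_inv_apply_not_isUnit T hdet]
    exact blockTriangular_zero

variable [LocallyFiniteOrderBot m]

theorem mul_inv_apply_self (hT : T.IsLowerTriangular) (hdet : IsUnit T.det) (k : m) :
    T k k * T⁻¹ k k = 1 := by
  have hrow := hT.mul_apply_eq_add_sum_Iio T⁻¹ k k
  have habove : ∑ i ∈ Iio k, T k i * T⁻¹ i k = 0 :=
    sum_eq_zero fun i hi => by rw [hT.inv (mem_Iio.mp hi : i < k), mul_zero]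
  rwa [mul_nonsing_inv T hdet, one_apply_eq, habove, add_zero, eq_comm] at hrow

theorem norm_inv_apply_le_mul_sum {𝕜 : Type*} [NormedField 𝕜] {T : Matrix m m 𝕜}
    (hT : T.IsLowerTriangular) (hdet : IsUnit T.det) {ρ : ℝ} {k j : m} (hkj : k ≠ j)
    (hkk : T k k ≠ 0) (hoff : ∀ i < k, ‖T k i‖ ≤ ρ * ‖T k k‖) :
    ‖T⁻¹ k j‖ ≤ ρ * ∑ i ∈ Iio k, ‖T⁻¹ i j‖ := by
  have hrow := hT.mul_apply_eq_add_sum_Iio T⁻¹ k j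
  rw [mul_nonsing_inv T hdet, one_apply_ne hkj] at hrow
  refine le_of_mul_le_mul_left ?_ (norm_pos_iff.mpr hkk)
  calc ‖T k k‖ * ‖T⁻¹ k j‖ = ‖∑ i ∈ Iio k, T k i * T⁻¹ i j‖ := by
        rw [← norm_mul, eq_neg_of_add_eq_zero_left hrow.symm, norm_neg]
    _ ≤ ∑ i ∈ Iio k, ‖T k i‖ * ‖T⁻¹ i j‖ :=
        norm_sum_le_of_le _ fun i _ => norm_mul_le _ _
    _ ≤ ∑ i ∈ Iio k, ρ * ‖T k k‖ * ‖T⁻¹ i j‖ := sum_le_sum fun i hi =>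
        mul_le_mul_of_nonneg_right (hoff i (mem_Iio.mp hi)) (norm_nonneg _)
    _ = ‖T k k‖ * (ρ * ∑ i ∈ Iio k, ‖T⁻¹ i j‖) := by
        rw [mul_sum, mul_sum]
        exact sum_congr rfl fun i _ => by ring

end Matrix.IsLowerTriangular

theorem Fin.sum_Iio_val {M : Type*} [AddCommMonoid M] {N : ℕ} (g : ℕ → M) (k : Fin N) :
    ∑ i ∈ Iio k, g i = ∑ n ∈ range k, g n := by
  rw [← Nat.Iio_eq_range, ← Fin.map_valEmbedding_Iio, sum_map, Fin.valEmbedding_apply]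

theorem sum_range_le_mul_pow_of_le_mul_sum {x : ℕ → ℝ} {j : ℕ} {c ρ : ℝ} (hρ : 0 ≤ ρ)
    (hzero : ∀ n < j, x n = 0) (hj : x j ≤ c)
    (hstep : ∀ n, j < n → x n ≤ ρ * ∑ i ∈ range n, x i) (d : ℕ) :
    ∑ i ∈ range (j + d + 1), x i ≤ c * (ρ + 1) ^ d := by
  induction d with
  | zero =>
    rw [add_zero, sum_range_succ, sum_eq_zero fun n hn => hzero n (mem_range.mp hn)]
    simpa using hj
  | succ d ih =>
    calc ∑ i ∈ range (j + (d + 1) + 1), x i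
          = ∑ i ∈ range (j + d + 1), x i + x (j + d + 1) := sum_range_succ _ _
      _ ≤ (ρ + 1) * ∑ i ∈ range (j + d + 1), x i := by
          linarith [hstep (j + d + 1) (by omega)]
      _ ≤ (ρ + 1) * (c * (ρ + 1) ^ d) := mul_le_mul_of_nonneg_left ih (by linarith)
      _ = c * (ρ + 1) ^ (d + 1) := by ring

theorem le_mul_pow_of_le_mul_sum {x : ℕ → ℝ} {j : ℕ} {c ρ : ℝ} (hρ : 0 ≤ ρ)
    (hzero : ∀ n < j, x n = 0) (hj : x j ≤ c)
    (hstep : ∀ n, j < n → x n ≤ ρ * ∑ i ∈ range n, x i) (d : ℕ) :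
    x (j + d + 1) ≤ ρ * c * (ρ + 1) ^ d :=
  calc x (j + d + 1) ≤ ρ * ∑ i ∈ range (j + d + 1), x i := hstep _ (by omega)
    _ ≤ ρ * (c * (ρ + 1) ^ d) :=
        mul_le_mul_of_nonneg_left (sum_range_le_mul_pow_of_le_mul_sum hρ hzero hj hstep d) hρ
    _ = ρ * c * (ρ + 1) ^ d := by ring

theorem Fin.le_mul_pow_of_le_mul_sum_Iio {N : ℕ} {a : Fin N → ℝ} {j : Fin N} {c ρ : ℝ}
    (hρ : 0 ≤ ρ) (ha : ∀ i, 0 ≤ a i) (hzero : ∀ i < j, a i = 0) (hj : a j ≤ c)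
    (hstep : ∀ k, j < k → a k ≤ ρ * ∑ i ∈ Iio k, a i) {k : Fin N} (hjk : j < k) :
    a k ≤ ρ * c * (ρ + 1) ^ (k - j - 1 : ℕ) := by
  -- extend `a` by zero past `N`, where the recursion holds because `a ≥ 0`
  set x : ℕ → ℝ := fun n => if h : n < N then a ⟨n, h⟩ else 0
  have hx : ∀ i : Fin N, x i = a i := fun i => dif_pos i.2
  have hxzero : ∀ n < (j : ℕ), x n = 0 := fun n hn =>
    (dif_pos (hn.trans j.2)).trans (hzero ⟨n, hn.trans j.2⟩ hn)
  have hxstep : ∀ n, (j : ℕ) < n → x n ≤ ρ * ∑ i ∈ range n, x i := by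
    intro n hn
    by_cases hnN : n < N
    · simpa only [← hx, Fin.sum_Iio_val x] using hstep ⟨n, hnN⟩ hn
    · simp only [x, dif_neg hnN]
      exact mul_nonneg hρ (sum_nonneg fun i _ => by split_ifs <;> simp [ha])
  obtain ⟨d, hd⟩ : ∃ d, (k : ℕ) = j + d + 1 := ⟨k - j - 1, by omega⟩
  have hxk := le_mul_pow_of_le_mul_sum hρ hxzero ((hx j).trans_le hj) hxstep d
  rw [← hd, hx] at hxk
  rwa [show (k - j - 1 : ℕ) = d by omega]

theorem Fin.sum_norm_sq_le_of_le_mul_pow {E : Type*} [SeminormedAddGroup E] {N : ℕ}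
    {v : Fin N → E} {k : Fin N} {c ρ : ℝ} (hzero : ∀ j, k < j → v j = 0)
    (hk : ‖v k‖ ≤ c)
    (hlt : ∀ j < k, ‖v j‖ ≤ ρ * c * (ρ + 1) ^ (k - j - 1 : ℕ)) :
    ∑ j, ‖v j‖ ^ 2 ≤ c ^ 2 * (1 + ρ ^ 2 * ∑ m ∈ range k, ((ρ + 1) ^ 2) ^ m) := by
  rw [sum_eq_add_sum_Iio_of_forall_gt_eq_zero fun j hj => by simp [hzero j hj]]
  have hoff : ∑ j ∈ Iio k, ‖v j‖ ^ 2 ≤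
      ∑ j ∈ Iio k, (ρ * c * (ρ + 1) ^ (k - j - 1 : ℕ)) ^ 2 :=
    sum_le_sum fun j hj => pow_le_pow_left₀ (norm_nonneg _) (hlt j (mem_Iio.mp hj)) 2
  have hgeom : ∑ j ∈ Iio k, (ρ * c * (ρ + 1) ^ (k - j - 1 : ℕ)) ^ 2 =
      c ^ 2 * ρ ^ 2 * ∑ m ∈ range k, ((ρ + 1) ^ 2) ^ m := by
    rw [Fin.sum_Iio_val (fun n => (ρ * c * (ρ + 1) ^ (k - n - 1 : ℕ)) ^ 2),
      ← sum_range_reflect, mul_sum]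
    refine sum_congr rfl fun n hn => ?_
    rw [show (k - (k - 1 - n) - 1 : ℕ) = n by have := mem_range.mp hn; omega, ← pow_mul]
    ring
  nlinarith [pow_le_pow_left₀ (norm_nonneg _) hk 2]

theorem add_two_sq_mul_sum_range_one_add_sq_mul_geom_sum (ρ : ℝ) (N : ℕ) :
    (ρ + 2) ^ 2 * ∑ k ∈ range N, (1 + ρ ^ 2 * ∑ m ∈ range k, ((ρ + 1) ^ 2) ^ m) =
      (ρ + 1) ^ (2 * N) + 2 * N * (ρ + 2) - 1 := by
  induction N with
  | zero => simp
  | succ N ih =>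
    rw [sum_range_succ, mul_add, ih, pow_mul, pow_mul]
    push_cast
    linear_combination ρ * (ρ + 2) * geom_sum_mul ((ρ + 1) ^ 2) N

theorem lemeire_bound_general (N : ℕ) (T : Matrix (Fin N) (Fin N) ℂ)
    (hTlower : ∀ k j : Fin N, k < j → T k j = 0)
    (δ : ℝ) (hδ : 0 < δ) (hdiag : ∀ k : Fin N, δ ≤ ‖T k k‖)
    (ρ : ℝ) (hρ : 0 ≤ ρ) (hoff : ∀ k j : Fin N, j < k → ‖T k j‖ ≤ ρ * ‖T k k‖) :
    Real.sqrt (∑ k : Fin N, ∑ j : Fin N, ‖T⁻¹ k j‖ ^ 2) ≤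
      (1 / ((ρ + 2) * δ)) *
        Real.sqrt ((ρ + 1) ^ (2 * N) + 2 * N * (ρ + 2) - 1) := by
  have hT : T.IsLowerTriangular := fun k j h => hTlower k j h
  have hTkk : ∀ k, T k k ≠ 0 := fun k => norm_pos_iff.mp (hδ.trans_le (hdiag k))
  have hdet : IsUnit T.det := hT.isUnit_det fun k => (hTkk k).isUnit
  have hdiagInv : ∀ k, ‖T⁻¹ k k‖ ≤ δ⁻¹ := fun k => by
    rw [eq_inv_of_mul_eq_one_right (hT.mul_inv_apply_self hdet k), norm_inv]
    exact inv_anti₀ hδ (hdiag k)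
  have hcol :
      ∀ k j : Fin N, j < k → ‖T⁻¹ k j‖ ≤ ρ * δ⁻¹ * (ρ + 1) ^ (k - j - 1 : ℕ) :=
    fun k j hjk => Fin.le_mul_pow_of_le_mul_sum_Iio (a := fun i => ‖T⁻¹ i j‖) hρ
      (fun _ => norm_nonneg _) (fun i hi => by simp only [hT.inv hi, norm_zero]) (hdiagInv j)
      (fun i hji => hT.norm_inv_apply_le_mul_sum hdet hji.ne' (hTkk i) (hoff i)) hjk
  have hrow : ∀ k : Fin N, ∑ j, ‖T⁻¹ k j‖ ^ 2 ≤
      δ⁻¹ ^ 2 * (1 + ρ ^ 2 * ∑ m ∈ range k, ((ρ + 1) ^ 2) ^ m) :=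
    fun k => Fin.sum_norm_sq_le_of_le_mul_pow (fun j hj => hT.inv hj) (hdiagInv k) (hcol k)
  have htotal : ∑ k, ∑ j, ‖T⁻¹ k j‖ ^ 2 ≤
      (1 / ((ρ + 2) * δ)) ^ 2 * ((ρ + 1) ^ (2 * N) + 2 * N * (ρ + 2) - 1) := by
    refine (sum_le_sum fun k _ => hrow k).trans_eq ?_
    rw [← mul_sum, Fin.sum_univ_eq_sum_range
        (fun k => 1 + ρ ^ 2 * ∑ m ∈ range k, ((ρ + 1) ^ 2) ^ m) N,
      ← add_two_sq_mul_sum_range_one_add_sq_mul_geom_sum]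
    field_simp
  calc Real.sqrt (∑ k, ∑ j, ‖T⁻¹ k j‖ ^ 2)
      ≤ Real.sqrt ((1 / ((ρ + 2) * δ)) ^ 2 * ((ρ + 1) ^ (2 * N) + 2 * N * (ρ + 2) - 1)) :=
        Real.sqrt_le_sqrt htotal
    _ = (1 / ((ρ + 2) * δ)) * Real.sqrt ((ρ + 1) ^ (2 * N) + 2 * N * (ρ + 2) - 1) := by
        rw [Real.sqrt_mul (sq_nonneg _), Real.sqrt_sq (by positivity)]

/-- **Lemeire's bound.** If `T` is an invertible lower-triangular complex `N × N` matrix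
(`N ≥ 1`) whose diagonal entries have modulus at least `δ > 0` and whose strictly
lower-triangular entries satisfy `|t_{kj}| ≤ ρ |t_{kk}|`, then the Frobenius norm of `T⁻¹`
is at most `(1/((ρ+2)δ)) √((ρ+1)^{2N} + 2N(ρ+2) − 1)`. -/
theorem lemeire_bound (N : ℕ) (hN : 1 ≤ N) (T : Matrix (Fin N) (Fin N) ℂ)
    (hTunit : IsUnit T)
    (hTlower : ∀ k j : Fin N, k < j → T k j = 0)
    (δ : ℝ) (hδ : 0 < δ) (hdiag : ∀ k : Fin N, δ ≤ ‖T k k‖)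
    (ρ : ℝ) (hρ : 0 ≤ ρ) (hoff : ∀ k j : Fin N, j < k → ‖T k j‖ ≤ ρ * ‖T k k‖) :
    Real.sqrt (∑ k : Fin N, ∑ j : Fin N, ‖T⁻¹ k j‖ ^ 2) ≤
      (1 / ((ρ + 2) * δ)) *
        Real.sqrt ((ρ + 1) ^ (2 * N) + 2 * N * (ρ + 2) - 1) :=
  lemeire_bound_general N T hTlower δ hδ hdiag ρ hρ hoff
end

section
/- Let N ≥ 1, let L ∈ ℂ^{N×N}, let W ∈ ℂ^{N×N} be invertible, let ỹ ∈ ℂ^N, and let S be a nonempty finite set of vectors in ℂ^N. Suppose x_ML ∈ S minimizes x ↦ ‖ỹ − Lx‖ over S, and x_WLD ∈ S minimizes x ↦ ‖W(ỹ − Lx)‖ over S. Then: (i) ‖ỹ − L·x_ML‖ ≤ ‖ỹ − L·x_WLD‖ ≤ κ(W)·‖ỹ − L·x_ML‖, where κ(W) = ‖W‖·‖W⁻¹‖ is the condition number of W; and (ii) ‖W(ỹ − L·x_WLD)‖ ≤ ‖W‖·‖ỹ − L·x_ML‖. -/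
/-!
Minimality of `x_ML` gives the lower bound. Minimality of `x_WLD` for the weighted residual,
tested against `x_ML`, gives `‖W r_WLD‖ ≤ ‖W r_ML‖ ≤ ‖W‖ ‖r_ML‖`; undoing the weight,
`‖r_WLD‖ = ‖W⁻¹ W r_WLD‖ ≤ ‖W⁻¹‖ ‖W r_WLD‖`, which gives the condition-number bound.
-/

open Matrix BigOperators

/-- The Euclidean (`ℓ²`) norm of a complex vector. -/
noncomputable def enorm {ι : Type*} [Fintype ι] (v : ι → ℂ) : ℝ :=
  Real.sqrt (∑ i, ‖v i‖ ^ 2)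

/-- The `ℓ²`-operator norm (largest singular value) of a square complex matrix. -/
noncomputable def opNorm {ι : Type*} [Fintype ι] [DecidableEq ι]
    (A : Matrix ι ι ℂ) : ℝ :=
  ‖Matrix.toEuclideanCLM (𝕜 := ℂ) A‖

section

variable {ι : Type*} [Fintype ι]

lemma enorm_eq_norm_toLp (v : ι → ℂ) : _root_.enorm v = ‖WithLp.toLp 2 v‖ := by
  rw [EuclideanSpace.norm_eq]; rfl

variable [DecidableEq ι]

lemma opNorm_nonneg (A : Matrix ι ι ℂ) : 0 ≤ opNorm A := norm_nonneg _

lemma enorm_mulVec_le (A : Matrix ι ι ℂ) (v : ι → ℂ) :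
    _root_.enorm (A *ᵥ v) ≤ opNorm A * _root_.enorm v := by
  rw [enorm_eq_norm_toLp, enorm_eq_norm_toLp, ← Matrix.toEuclideanCLM_toLp]
  exact (Matrix.toEuclideanCLM (𝕜 := ℂ) A).le_opNorm _

lemma enorm_le_opNorm_inv_mul_enorm_mulVec {A : Matrix ι ι ℂ} (hA : IsUnit A) (v : ι → ℂ) :
    _root_.enorm v ≤ opNorm A⁻¹ * _root_.enorm (A *ᵥ v) := by
  have hdet : IsUnit A.det := (Matrix.isUnit_iff_isUnit_det A).mp hA
  simpa only [mulVec_mulVec, nonsing_inv_mul A hdet, one_mulVec] using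
    enorm_mulVec_le A⁻¹ (A *ᵥ v)

end

theorem wld_distance_bound_general (N : ℕ)
    (L W : Matrix (Fin N) (Fin N) ℂ) (hW : IsUnit W)
    (ytilde : Fin N → ℂ) (S : Finset (Fin N → ℂ))
    (xML xWLD : Fin N → ℂ) (hxML : xML ∈ S) (hxWLD : xWLD ∈ S)
    (hMLmin : ∀ x ∈ S, _root_.enorm (ytilde - L.mulVec xML) ≤ _root_.enorm (ytilde - L.mulVec x))
    (hWLDmin : ∀ x ∈ S,
      _root_.enorm (W.mulVec (ytilde - L.mulVec xWLD)) ≤ _root_.enorm (W.mulVec (ytilde - L.mulVec x))) :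
    (_root_.enorm (ytilde - L.mulVec xML) ≤ _root_.enorm (ytilde - L.mulVec xWLD) ∧
      _root_.enorm (ytilde - L.mulVec xWLD) ≤
        (opNorm W * opNorm W⁻¹) * _root_.enorm (ytilde - L.mulVec xML)) ∧
    _root_.enorm (W.mulVec (ytilde - L.mulVec xWLD)) ≤
      opNorm W * _root_.enorm (ytilde - L.mulVec xML) := by
  set rML := ytilde - L *ᵥ xML
  set rWLD := ytilde - L *ᵥ xWLD
  have weighted : _root_.enorm (W *ᵥ rWLD) ≤ opNorm W * _root_.enorm rML :=
    (hWLDmin xML hxML).trans (enorm_mulVec_le W rML)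
  refine ⟨⟨hMLmin xWLD hxWLD, ?_⟩, weighted⟩
  calc _root_.enorm rWLD ≤ opNorm W⁻¹ * _root_.enorm (W *ᵥ rWLD) :=
        enorm_le_opNorm_inv_mul_enorm_mulVec hW rWLD
    _ ≤ opNorm W⁻¹ * (opNorm W * _root_.enorm rML) :=
        mul_le_mul_of_nonneg_left weighted (opNorm_nonneg _)
    _ = (opNorm W * opNorm W⁻¹) * _root_.enorm rML := by ring

/-- **Lemma 2 (WLD distance bounds).** If `x_ML` minimizes `‖ỹ − Lx‖` and `x_WLD`
minimizes `‖W(ỹ − Lx)‖` over a nonempty finite set `S` of candidate vectors, with `W`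
invertible, then
`‖ỹ − L x_ML‖ ≤ ‖ỹ − L x_WLD‖ ≤ κ(W) ‖ỹ − L x_ML‖`, where `κ(W) = ‖W‖ ‖W⁻¹‖`,
and `‖W(ỹ − L x_WLD)‖ ≤ ‖W‖ ‖ỹ − L x_ML‖`. -/
theorem wld_distance_bound (N : ℕ) (hN : 1 ≤ N)
    (L W : Matrix (Fin N) (Fin N) ℂ) (hW : IsUnit W)
    (ytilde : Fin N → ℂ) (S : Finset (Fin N → ℂ)) (hS : S.Nonempty)
    (xML xWLD : Fin N → ℂ) (hxML : xML ∈ S) (hxWLD : xWLD ∈ S)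
    (hMLmin : ∀ x ∈ S, _root_.enorm (ytilde - L.mulVec xML) ≤ _root_.enorm (ytilde - L.mulVec x))
    (hWLDmin : ∀ x ∈ S,
      _root_.enorm (W.mulVec (ytilde - L.mulVec xWLD)) ≤ _root_.enorm (W.mulVec (ytilde - L.mulVec x))) :
    (_root_.enorm (ytilde - L.mulVec xML) ≤ _root_.enorm (ytilde - L.mulVec xWLD) ∧
      _root_.enorm (ytilde - L.mulVec xWLD) ≤
        (opNorm W * opNorm W⁻¹) * _root_.enorm (ytilde - L.mulVec xML)) ∧
    _root_.enorm (W.mulVec (ytilde - L.mulVec xWLD)) ≤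
      opNorm W * _root_.enorm (ytilde - L.mulVec xML) :=
  wld_distance_bound_general N L W hW ytilde S xML xWLD hxML hxWLD hMLmin hWLDmin
end

section
/- Let M ≥ N ≥ 2 and 1 ≤ ν ≤ N−1. Let Q, Q̃ ∈ ℂ^{M×N} satisfy QᴴQ = Q̃ᴴQ̃ = I_N. Let L, L̃ ∈ ℂ^{N×N} be lower-triangular with real positive diagonal entries, partitioned conformally as L = [[P, 0],[R, S]] and L̃ = [[P̃, 0],[R̃, S̃]], where P, P̃ are ν×ν. Let J_a and J_b be permutation matrices of sizes ν and N−ν, and let J = [[J_a, 0],[0, J_b]]. Assume Q·L·J = Q̃·L̃. Set W_p = [[I_ν, 0],[0, Ω(S)·S⁻¹]] and W̃_p = [[I_ν, 0],[0, Ω(S̃)·S̃⁻¹]]. Then for every y ∈ ℂ^M and every x ∈ ℂ^N, ‖W_p(Qᴴy − L·x)‖ = ‖W̃_p(Q̃ᴴy − L̃·J⁻¹·x)‖. -/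
open Matrix BigOperators

/-- For an invertible complex matrix `S`, `Ω(S)` is the real diagonal matrix with `k`-th
diagonal entry `(∑_j |(S⁻¹)_{kj}|²)^{-1/2}`, i.e. `Ω(S) = (diag(S⁻¹ S⁻ᴴ))^{-1/2}`. -/
noncomputable def Omega {ι : Type*} [Fintype ι] [DecidableEq ι]
    (S : Matrix ι ι ℂ) : Matrix ι ι ℂ :=
  Matrix.diagonal fun k => (((Real.sqrt (∑ j, ‖S⁻¹ k j‖ ^ 2))⁻¹ : ℝ) : ℂ)

/-! Since `Q` and `Q̃` have orthonormal columns and `L̃` is invertible, `Q̃ = Q Z` for the unitary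
`Z = L J L̃⁻¹`, and `Z L̃ = L J`. Comparing the upper-right blocks of `Z L̃ = L J` shows that the
upper-right block of `Z` vanishes; being unitary, `Z` is then block diagonal, `Z = diag(A, D)` with
`D S̃ = S J_b`.
So the residual for `Q̃, L̃, J⁻¹x` is `Zᴴ` applied to the residual for `Q, L, x`. Finally
`Ω(S̃) S̃⁻¹ Dᴴ = J_b⁻¹ Ω(S) S⁻¹`: multiplying `S` on the left by a unitary matrix does not change
the row norms of `S⁻¹`, and multiplying on the right by `J_b` permutes them. Hence
`W̃_p Zᴴ = diag(Aᴴ, J_b⁻¹) W_p`, and the unitary factor `diag(Aᴴ, J_b⁻¹)` preserves the norm. -/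

namespace Matrix

theorem enorm_eq_sqrt_re_dotProduct_star {ι : Type*} [Fintype ι] (v : ι → ℂ) :
    _root_.enorm v = √(v ⬝ᵥ star v).re := by
  rw [← EuclideanSpace.inner_toLp_toLp]
  exact (EuclideanSpace.norm_eq _).symm.trans (norm_eq_sqrt_re_inner (𝕜 := ℂ) _)

variable {n n₁ n₂ : Type*} [Fintype n] [DecidableEq n] [Fintype n₁] [DecidableEq n₁]
  [Fintype n₂] [DecidableEq n₂]

theorem enorm_mulVec_of_mem_unitaryGroup {U : Matrix n n ℂ} (hU : U ∈ unitaryGroup n ℂ)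
    (v : n → ℂ) : _root_.enorm (U *ᵥ v) = _root_.enorm v := by
  rw [enorm_eq_sqrt_re_dotProduct_star, enorm_eq_sqrt_re_dotProduct_star, star_mulVec,
    dotProduct_comm, ← dotProduct_mulVec, mulVec_mulVec, ← star_eq_conjTranspose,
    mem_unitaryGroup_iff'.1 hU, one_mulVec, dotProduct_comm]

theorem enorm_row_mul_of_mem_unitaryGroup {m : Type*} {U : Matrix n n ℂ}
    (hU : U ∈ unitaryGroup n ℂ) (M : Matrix m n ℂ) (k : m) :
    _root_.enorm ((M * U) k) = _root_.enorm (M k) := by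
  have hrow : (M * U) k = Uᵀ *ᵥ M k := by
    ext j
    simp [mul_apply, mulVec, dotProduct, mul_comm]
  rw [hrow, enorm_mulVec_of_mem_unitaryGroup (transpose_mem_unitaryGroup_iff.2 hU)]

theorem permMatrix_mem_unitaryGroup (σ : Equiv.Perm n) :
    σ.permMatrix ℂ ∈ unitaryGroup n ℂ := by
  rw [mem_unitaryGroup_iff', star_eq_conjTranspose, conjTranspose_permMatrix,
    ← permMatrix_mul, mul_inv_cancel, permMatrix_one]

theorem inv_permMatrix (σ : Equiv.Perm n) : (σ.permMatrix ℂ)⁻¹ = σ⁻¹.permMatrix ℂ := by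
  rw [inv_eq_left_inv (mem_unitaryGroup_iff'.1 (permMatrix_mem_unitaryGroup σ)),
    star_eq_conjTranspose, conjTranspose_permMatrix]

theorem fromBlocks_zero₁₂_mem_unitaryGroup_iff {α : Type*} [CommRing α] [StarRing α]
    {A : Matrix n₁ n₁ α} {C : Matrix n₂ n₁ α} {D : Matrix n₂ n₂ α} :
    fromBlocks A 0 C D ∈ unitaryGroup (n₁ ⊕ n₂) α ↔
      A ∈ unitaryGroup n₁ α ∧ C = 0 ∧ D ∈ unitaryGroup n₂ α := by
  simp only [mem_unitaryGroup_iff', star_eq_conjTranspose]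
  constructor
  · intro h
    rw [fromBlocks_conjTranspose, fromBlocks_multiply, ← fromBlocks_one, fromBlocks_inj] at h
    simp only [conjTranspose_zero, Matrix.zero_mul, zero_add] at h
    obtain ⟨hAC, -, hDC, hD⟩ := h
    have hC : C = 0 := by
      rw [← Matrix.one_mul C, ← mul_eq_one_comm.1 hD, Matrix.mul_assoc, hDC, Matrix.mul_zero]
    subst hC
    exact ⟨by simpa using hAC, rfl, hD⟩
  · rintro ⟨hA, rfl, hD⟩
    simp [fromBlocks_conjTranspose, fromBlocks_multiply, hA, hD]

theorem isUnit_det_of_lowerTriangular {m : Type*} [Fintype m] [DecidableEq m] [LinearOrder m]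
    {T : Matrix m m ℂ} (hT : ∀ i j, i < j → T i j = 0)
    (hTdiag : ∀ i, ∃ r : ℝ, 0 < r ∧ T i i = r) : IsUnit T.det := by
  rw [det_of_isLowerTriangular T hT, isUnit_iff_ne_zero, Finset.prod_ne_zero_iff]
  intro i _
  obtain ⟨r, hr, hTi⟩ := hTdiag i
  rw [hTi]
  exact_mod_cast hr.ne'

theorem exists_mem_unitaryGroup_of_mul_eq_mul {α m : Type*} [Fintype m] [CommRing α]
    [StarRing α] {Q Q' : Matrix m n α} {X Y : Matrix n n α} (hQ : Qᴴ * Q = 1)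
    (hQ' : Q'ᴴ * Q' = 1) (hY : IsUnit Y.det) (h : Q * X = Q' * Y) :
    ∃ Z ∈ unitaryGroup n α, Q' = Q * Z ∧ Z * Y = X := by
  have hQ'Z : Q' = Q * (X * Y⁻¹) := by
    rw [← Matrix.mul_assoc, h, mul_nonsing_inv_cancel_right _ _ hY]
  refine ⟨X * Y⁻¹, ?_, hQ'Z, nonsing_inv_mul_cancel_right _ _ hY⟩
  rw [mem_unitaryGroup_iff', ← hQ', hQ'Z, conjTranspose_mul, Matrix.mul_assoc,
    ← Matrix.mul_assoc Qᴴ, hQ, Matrix.one_mul, star_eq_conjTranspose]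

theorem exists_fromBlocks_of_mem_unitaryGroup_of_mul_eq {α : Type*} [CommRing α] [StarRing α]
    {Z : Matrix (n₁ ⊕ n₂) (n₁ ⊕ n₂) α} (hZ : Z ∈ unitaryGroup (n₁ ⊕ n₂) α)
    {P P' : Matrix n₁ n₁ α} {R R' : Matrix n₂ n₁ α} {S S' : Matrix n₂ n₂ α}
    (hS : IsUnit S.det) (h : Z * fromBlocks P 0 R S = fromBlocks P' 0 R' S') :
    ∃ A ∈ unitaryGroup n₁ α, ∃ D ∈ unitaryGroup n₂ α,
      Z = fromBlocks A 0 0 D ∧ D * S = S' := by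
  rw [← fromBlocks_toBlocks Z, fromBlocks_multiply, fromBlocks_inj] at h
  simp only [Matrix.mul_zero, zero_add] at h
  obtain ⟨-, hBS, -, hDS⟩ := h
  have hB : Z.toBlocks₁₂ = 0 := calc
    Z.toBlocks₁₂ = Z.toBlocks₁₂ * S * S⁻¹ := (mul_nonsing_inv_cancel_right _ _ hS).symm
    _ = 0 := by rw [hBS, Matrix.zero_mul]
  rw [← fromBlocks_toBlocks Z, hB, fromBlocks_zero₁₂_mem_unitaryGroup_iff] at hZ
  obtain ⟨hA, hC, hD⟩ := hZ
  exact ⟨_, hA, _, hD, (fromBlocks_toBlocks Z).symm.trans (by rw [hB, hC]), hDS⟩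

theorem conjTranspose_mul_mulVec_sub_mulVec_inv_mulVec {α m : Type*} [Fintype m] [CommRing α]
    [StarRing α]
    {Z L L' J : Matrix n n α} (hZ : Z ∈ unitaryGroup n α) (hJ : IsUnit J.det)
    (h : Z * L' = L * J) (Q : Matrix m n α) (y : m → α) (x : n → α) :
    (Q * Z)ᴴ *ᵥ y - L' *ᵥ (J⁻¹ *ᵥ x) = star Z *ᵥ (Qᴴ *ᵥ y - L *ᵥ x) := by
  have hL' : L' = star Z * L * J := by
    rw [Matrix.mul_assoc, ← h, ← Matrix.mul_assoc, mem_unitaryGroup_iff'.1 hZ, Matrix.one_mul]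
  rw [mulVec_mulVec, hL', mul_nonsing_inv_cancel_right _ _ hJ, conjTranspose_mul,
    ← star_eq_conjTranspose, mulVec_sub, mulVec_mulVec, mulVec_mulVec]

theorem Omega_eq_diagonal_enorm (T : Matrix n n ℂ) :
    Omega T = diagonal fun k => (((_root_.enorm (T⁻¹ k))⁻¹ : ℝ) : ℂ) := rfl

theorem Omega_unitary_mul {U : Matrix n n ℂ} (hU : U ∈ unitaryGroup n ℂ) (T : Matrix n n ℂ) :
    Omega (U * T) = Omega T := by
  have hU' : U⁻¹ = star U := inv_eq_left_inv (mem_unitaryGroup_iff'.1 hU)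
  simp only [Omega_eq_diagonal_enorm, Matrix.mul_inv_rev, hU',
    enorm_row_mul_of_mem_unitaryGroup (Unitary.star_mem hU)]

theorem Omega_mul_permMatrix (T : Matrix n n ℂ) (σ : Equiv.Perm n) :
    Omega (T * σ.permMatrix ℂ) = σ⁻¹.permMatrix ℂ * Omega T * σ.permMatrix ℂ := by
  rw [Omega_eq_diagonal_enorm, Omega_eq_diagonal_enorm, Matrix.mul_inv_rev, inv_permMatrix]
  simp only [Equiv.Perm.permMatrix, PEquiv.toMatrix_toPEquiv_mul, PEquiv.mul_toMatrix_toPEquiv,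
    submatrix_submatrix, Function.comp_id, Function.id_comp, Equiv.Perm.inv_def,
    submatrix_diagonal_equiv]
  rfl

theorem Omega_mul_inv_mul_star_of_mul_eq {D T T' : Matrix n n ℂ} (hD : D ∈ unitaryGroup n ℂ)
    {σ : Equiv.Perm n} (h : D * T' = T * σ.permMatrix ℂ) :
    Omega T' * T'⁻¹ * star D = σ⁻¹.permMatrix ℂ * (Omega T * T⁻¹) := by
  have hT' : T' = star D * (T * σ.permMatrix ℂ) := by
    rw [← h, ← Matrix.mul_assoc, mem_unitaryGroup_iff'.1 hD, Matrix.one_mul]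
  have hD' : star D = D⁻¹ := (inv_eq_left_inv (mem_unitaryGroup_iff'.1 hD)).symm
  rw [Matrix.mul_assoc, hD', ← Matrix.mul_inv_rev, h, hT',
    Omega_unitary_mul (Unitary.star_mem hD), Omega_mul_permMatrix, Matrix.mul_inv_rev,
    inv_permMatrix, Matrix.mul_assoc, ← Matrix.mul_assoc (σ.permMatrix ℂ), ← permMatrix_mul,
    inv_mul_cancel, permMatrix_one, Matrix.one_mul, Matrix.mul_assoc]

theorem enorm_fromBlocks_Omega_mulVec_star_mulVec {A : Matrix n₁ n₁ ℂ} {D T T' : Matrix n₂ n₂ ℂ}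
    (hA : A ∈ unitaryGroup n₁ ℂ) (hD : D ∈ unitaryGroup n₂ ℂ) {σ : Equiv.Perm n₂}
    (h : D * T' = T * σ.permMatrix ℂ) (v : n₁ ⊕ n₂ → ℂ) :
    _root_.enorm (fromBlocks (1 : Matrix n₁ n₁ ℂ) 0 0 (Omega T' * T'⁻¹) *ᵥ (star (fromBlocks A 0 0 D) *ᵥ v)) =
      _root_.enorm (fromBlocks (1 : Matrix n₁ n₁ ℂ) 0 0 (Omega T * T⁻¹) *ᵥ v) := by
  have hW : fromBlocks (1 : Matrix n₁ n₁ ℂ) 0 0 (Omega T' * T'⁻¹) * star (fromBlocks A 0 0 D) =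
      fromBlocks (star A) 0 0 (σ⁻¹.permMatrix ℂ) * fromBlocks 1 0 0 (Omega T * T⁻¹) := by
    rw [star_eq_conjTranspose, fromBlocks_conjTranspose, fromBlocks_multiply, fromBlocks_multiply,
      ← star_eq_conjTranspose D, Omega_mul_inv_mul_star_of_mul_eq hD h]
    simp [star_eq_conjTranspose]
  have hU : fromBlocks (star A) 0 0 (σ⁻¹.permMatrix ℂ) ∈ unitaryGroup (n₁ ⊕ n₂) ℂ :=
    fromBlocks_zero₁₂_mem_unitaryGroup_iff.2
      ⟨Unitary.star_mem hA, rfl, permMatrix_mem_unitaryGroup _⟩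
  rw [mulVec_mulVec, hW, ← mulVec_mulVec, enorm_mulVec_of_mem_unitaryGroup hU]

end Matrix

theorem wld_perm_distances_general (M ν m : ℕ)
    (Q Qt : Matrix (Fin M) (Fin ν ⊕ Fin m) ℂ)
    (hQ : Qᴴ * Q = 1) (hQt : Qtᴴ * Qt = 1)
    (P Pt : Matrix (Fin ν) (Fin ν) ℂ) (R Rt : Matrix (Fin m) (Fin ν) ℂ)
    (S St : Matrix (Fin m) (Fin m) ℂ)
    (hPt : ∀ i j : Fin ν, i < j → Pt i j = 0)
    (hPtdiag : ∀ i : Fin ν, ∃ r : ℝ, 0 < r ∧ Pt i i = (r : ℂ))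
    (hSt : ∀ i j : Fin m, i < j → St i j = 0)
    (hStdiag : ∀ i : Fin m, ∃ r : ℝ, 0 < r ∧ St i i = (r : ℂ))
    (Ja : Equiv.Perm (Fin ν)) (Jb : Equiv.Perm (Fin m))
    (hQLJ : Q * Matrix.fromBlocks P 0 R S *
        Matrix.fromBlocks (Ja.permMatrix ℂ) 0 0 (Jb.permMatrix ℂ) =
      Qt * Matrix.fromBlocks Pt 0 Rt St) :
    ∀ (y : Fin M → ℂ) (x : Fin ν ⊕ Fin m → ℂ),
      _root_.enorm ((Matrix.fromBlocks (1 : Matrix (Fin ν) (Fin ν) ℂ) 0 0 (Omega S * S⁻¹)).mulVec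
          (Qᴴ.mulVec y - (Matrix.fromBlocks P 0 R S).mulVec x)) =
      _root_.enorm ((Matrix.fromBlocks (1 : Matrix (Fin ν) (Fin ν) ℂ) 0 0 (Omega St * St⁻¹)).mulVec
          (Qtᴴ.mulVec y - (Matrix.fromBlocks Pt 0 Rt St).mulVec
            ((Matrix.fromBlocks (Ja.permMatrix ℂ) 0 0 (Jb.permMatrix ℂ))⁻¹.mulVec x))) := by
  intro y x
  have hSt_unit := isUnit_det_of_lowerTriangular hSt hStdiag
  have hLt_unit : IsUnit (fromBlocks Pt 0 Rt St).det := by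
    rw [det_fromBlocks_zero₁₂]
    exact (isUnit_det_of_lowerTriangular hPt hPtdiag).mul hSt_unit
  rw [Matrix.mul_assoc] at hQLJ
  obtain ⟨Z, hZ, rfl, hZLt⟩ := exists_mem_unitaryGroup_of_mul_eq_mul hQ hQt hLt_unit hQLJ
  rw [conjTranspose_mul_mulVec_sub_mulVec_inv_mulVec hZ (by simp) hZLt]
  obtain ⟨A, hA, D, hD, rfl, hDSt⟩ := exists_fromBlocks_of_mem_unitaryGroup_of_mul_eq hZ hSt_unit
    (P' := P * Ja.permMatrix ℂ) (R' := R * Ja.permMatrix ℂ) (S' := S * Jb.permMatrix ℂ)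
    (by rw [hZLt, fromBlocks_multiply]; simp)
  rw [enorm_fromBlocks_Omega_mulVec_star_mulVec hA hD hDSt]

/-- **Lemma 3 (invariance of WLD metrics under within-block permutations).**
With `L = [[P,0],[R,S]]`, `L̃ = [[P̃,0],[R̃,S̃]]` lower-triangular (with real positive
diagonals), `QᴴQ = Q̃ᴴQ̃ = I`, `J = [[J_a,0],[0,J_b]]` a block-diagonal permutation matrix,
and `Q L J = Q̃ L̃`, the punctured distances agree:
`‖W_p(Qᴴy − Lx)‖ = ‖W̃_p(Q̃ᴴy − L̃ J⁻¹ x)‖` for all `y`, `x`, where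
`W_p = [[I,0],[0,Ω(S)S⁻¹]]` and `W̃_p = [[I,0],[0,Ω(S̃)S̃⁻¹]]`. -/
theorem wld_perm_distances (M ν m : ℕ) (hν : 1 ≤ ν) (hm : 1 ≤ m) (hMN : ν + m ≤ M)
    (Q Qt : Matrix (Fin M) (Fin ν ⊕ Fin m) ℂ)
    (hQ : Qᴴ * Q = 1) (hQt : Qtᴴ * Qt = 1)
    (P Pt : Matrix (Fin ν) (Fin ν) ℂ) (R Rt : Matrix (Fin m) (Fin ν) ℂ)
    (S St : Matrix (Fin m) (Fin m) ℂ)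
    (hP : ∀ i j : Fin ν, i < j → P i j = 0)
    (hPdiag : ∀ i : Fin ν, ∃ r : ℝ, 0 < r ∧ P i i = (r : ℂ))
    (hS : ∀ i j : Fin m, i < j → S i j = 0)
    (hSdiag : ∀ i : Fin m, ∃ r : ℝ, 0 < r ∧ S i i = (r : ℂ))
    (hPt : ∀ i j : Fin ν, i < j → Pt i j = 0)
    (hPtdiag : ∀ i : Fin ν, ∃ r : ℝ, 0 < r ∧ Pt i i = (r : ℂ))
    (hSt : ∀ i j : Fin m, i < j → St i j = 0)
    (hStdiag : ∀ i : Fin m, ∃ r : ℝ, 0 < r ∧ St i i = (r : ℂ))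
    (Ja : Equiv.Perm (Fin ν)) (Jb : Equiv.Perm (Fin m))
    (hQLJ : Q * Matrix.fromBlocks P 0 R S *
        Matrix.fromBlocks (Ja.permMatrix ℂ) 0 0 (Jb.permMatrix ℂ) =
      Qt * Matrix.fromBlocks Pt 0 Rt St) :
    ∀ (y : Fin M → ℂ) (x : Fin ν ⊕ Fin m → ℂ),
      _root_.enorm ((Matrix.fromBlocks (1 : Matrix (Fin ν) (Fin ν) ℂ) 0 0 (Omega S * S⁻¹)).mulVec
          (Qᴴ.mulVec y - (Matrix.fromBlocks P 0 R S).mulVec x)) =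
      _root_.enorm ((Matrix.fromBlocks (1 : Matrix (Fin ν) (Fin ν) ℂ) 0 0 (Omega St * St⁻¹)).mulVec
          (Qtᴴ.mulVec y - (Matrix.fromBlocks Pt 0 Rt St).mulVec
            ((Matrix.fromBlocks (Ja.permMatrix ℂ) 0 0 (Jb.permMatrix ℂ))⁻¹.mulVec x))) :=
  wld_perm_distances_general M ν m Q Qt hQ hQt P Pt R Rt S St hPt hPtdiag hSt hStdiag Ja Jb hQLJ
end

section
/- Let S ∈ ℂ^{m×m} be lower-triangular with real positive diagonal entries. Then for each k, the k-th diagonal entry of Ω(S)·S⁻¹ is a real number λ_k with 0 < λ_k ≤ 1. -/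
open Matrix BigOperators

/-! The diagonal of `S⁻¹` is `1 / diag S`, so the `k`-th diagonal entry of `Ω(S) S⁻¹` is
`|(S⁻¹)_{kk}| / ‖k-th row of S⁻¹‖`, a positive number that is at most `1`. -/

namespace Matrix

variable {n K : Type*} [Fintype n] [LinearOrder n] [Field K] {M : Matrix n n K}

theorem IsLowerTriangular.isUnit_det_s4 (hM : M.IsLowerTriangular) (hd : ∀ i, M i i ≠ 0) :
    IsUnit M.det := by
  rw [det_of_isLowerTriangular M hM]
  exact (Finset.prod_ne_zero_iff.2 fun i _ => hd i).isUnit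

theorem IsLowerTriangular.inv_apply_self (hM : M.IsLowerTriangular) (hd : ∀ i, M i i ≠ 0)
    (k : n) : M⁻¹ k k = (M k k)⁻¹ := by
  have hdet := hM.isUnit_det_s4 hd
  have : Invertible M := M.invertibleOfIsUnitDet hdet
  have hMinv : M⁻¹.IsLowerTriangular := blockTriangular_inv_of_blockTriangular hM
  have hrow : ∑ j, M k j * M⁻¹ j k = 1 := by
    simpa [mul_apply] using congr_fun₂ (M.mul_nonsing_inv hdet) k k
  rw [Finset.sum_eq_single k (fun j _ hjk => ?_) (by simp)] at hrow
  · exact eq_inv_of_mul_eq_one_right hrow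
  rcases hjk.lt_or_gt with h | h
  · rw [hMinv h, mul_zero]
  · rw [hM h, zero_mul]

end Matrix

theorem norm_le_sqrt_sum_norm_sq {ι E : Type*} [Fintype ι] [SeminormedAddGroup E]
    (v : ι → E) (k : ι) : ‖v k‖ ≤ √(∑ j, ‖v j‖ ^ 2) :=
  Real.le_sqrt_of_sq_le <|
    Finset.single_le_sum (f := fun j => ‖v j‖ ^ 2) (fun _ _ => sq_nonneg _) (Finset.mem_univ k)

theorem norm_div_sqrt_sum_norm_sq_mem_Ioc {ι E : Type*} [Fintype ι] [NormedAddGroup E]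
    (v : ι → E) {k : ι} (hk : v k ≠ 0) : ‖v k‖ / √(∑ j, ‖v j‖ ^ 2) ∈ Set.Ioc 0 1 := by
  have hle := norm_le_sqrt_sum_norm_sq v k
  have hpos : 0 < ‖v k‖ := norm_pos_iff.2 hk
  exact ⟨div_pos hpos (hpos.trans_le hle), div_le_one_of_le₀ hle (Real.sqrt_nonneg _)⟩

theorem Omega_mul_apply {ι : Type*} [Fintype ι] [DecidableEq ι] (S A : Matrix ι ι ℂ) (i j : ι) :
    (Omega S * A) i j = (((√(∑ l, ‖S⁻¹ i l‖ ^ 2))⁻¹ : ℝ) : ℂ) * A i j := by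
  rw [Omega, diagonal_mul]

/-- If `S` is lower-triangular with real positive diagonal entries, then every diagonal
entry of `Ω(S) S⁻¹` is a real number `λ` with `0 < λ ≤ 1`. -/
theorem omega_Sinv_diag_bounds (m : ℕ) (S : Matrix (Fin m) (Fin m) ℂ)
    (hlower : ∀ i j : Fin m, i < j → S i j = 0)
    (hdiag : ∀ i : Fin m, ∃ r : ℝ, 0 < r ∧ S i i = (r : ℂ)) :
    ∀ k : Fin m, ∃ lam : ℝ, 0 < lam ∧ lam ≤ 1 ∧ (Omega S * S⁻¹) k k = (lam : ℂ) := by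
  intro k
  have hS : S.IsLowerTriangular := fun i j hij => hlower i j hij
  have hd : ∀ i, S i i ≠ 0 := fun i => by
    obtain ⟨r, hr, hSr⟩ := hdiag i
    exact hSr ▸ Complex.ofReal_ne_zero.2 hr.ne'
  obtain ⟨r, hr, hSr⟩ := hdiag k
  have hinv : S⁻¹ k k = ((r⁻¹ : ℝ) : ℂ) := by
    rw [hS.inv_apply_self hd k, hSr, Complex.ofReal_inv]
  have hnorm : ‖S⁻¹ k k‖ = r⁻¹ := by
    rw [hinv, Complex.norm_real, Real.norm_of_nonneg (inv_nonneg.2 hr.le)]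
  obtain ⟨hpos, hle⟩ := norm_div_sqrt_sum_norm_sq_mem_Ioc (S⁻¹ k)
    (hinv ▸ Complex.ofReal_ne_zero.2 (inv_ne_zero hr.ne'))
  refine ⟨_, hpos, hle, ?_⟩
  rw [Omega_mul_apply, hnorm, hinv]
  push_cast
  ring
end

section
/- Let M ≥ N ≥ 1, let Es, N0 > 0 be reals with β = Es/N0. Let Q ∈ ℂ^{M×N} satisfy QᴴQ = I_N, let L ∈ ℂ^{N×N}, and let W_p ∈ ℂ^{N×N} satisfy diag(W_pW_pᴴ) = I_N. Set H = Q·L, L_p = W_p·L, G_p = (1/N0)·L_pᴴL_p, and F_p = (1/N0)·Q·W_pᴴ·L_p. Then G_p + (1/Es)·I_N, I_N + β·L_pᴴL_p and I_N + β·L_pL_pᴴ are positive-definite Hermitian matrices (hence invertible with positive real determinants), and the following identity holds: Es·Re Tr(G_p) + N·ln(Es) + ln det(G_p + (1/Es)·I_N) − Re Tr( F_pᴴ·(Es·H·Hᴴ + N0·I_M)·F_p·(G_p + (1/Es)·I_N)⁻¹ ) = ln det(I_N + β·L_pᴴL_p) − Re Tr( (I_N − W_pW_pᴴ)·(I_N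 + β·L_pL_pᴴ)⁻¹ ). (This common value is the lower bound I_LB^WLD on the achievable information rate of the WLD detector with Gaussian inputs established in Theorem 1.) -/
/-!
Writing `A = β Lpᴴ`, one has `Gp + Es⁻¹ I = Es⁻¹ (I + A Lp)`, and since `Q` is an isometry the
quadratic form `Fpᴴ (Es H Hᴴ + N₀ I) Fp (Gp + Es⁻¹ I)⁻¹` equals `A (Lp A + Wp Wpᴴ) Lp (I + A Lp)⁻¹`.
Its trace is evaluated with the push-through identity `A (I + Lp A)⁻¹ = (I + A Lp)⁻¹ A`, which
trades `(I + β Lpᴴ Lp)⁻¹` for `(I + β Lp Lpᴴ)⁻¹`; the unit rows of `Wp` enter only through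
`tr (Wp Wpᴴ) = N`.
-/

open Matrix
open scoped ComplexOrder

namespace Matrix

section OneAddMul

variable {m n α : Type*} [Fintype m] [Fintype n] [DecidableEq m] [DecidableEq n] [CommRing α]

theorem mul_inv_one_add_mul_comm (A : Matrix m n α) (B : Matrix n m α)
    (h : IsUnit (1 + A * B).det) : A * (1 + B * A)⁻¹ = (1 + A * B)⁻¹ * A := by
  have h' : IsUnit (1 + B * A).det := det_one_add_mul_comm A B ▸ h
  have hcomm : (1 + A * B) * A = A * (1 + B * A) := by
    rw [Matrix.add_mul, Matrix.mul_add, Matrix.one_mul, Matrix.mul_one, Matrix.mul_assoc]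
  calc A * (1 + B * A)⁻¹ = (1 + A * B)⁻¹ * ((1 + A * B) * A) * (1 + B * A)⁻¹ := by
        rw [← Matrix.mul_assoc, nonsing_inv_mul _ h, Matrix.one_mul]
    _ = (1 + A * B)⁻¹ * A := by
        rw [hcomm, Matrix.mul_assoc, Matrix.mul_assoc, mul_nonsing_inv _ h', Matrix.mul_one]

theorem one_sub_inv_one_add_mul (A : Matrix m n α) (B : Matrix n m α)
    (h : IsUnit (1 + A * B).det) : 1 - (1 + A * B)⁻¹ = A * (1 + B * A)⁻¹ * B :=
  calc 1 - (1 + A * B)⁻¹ = (1 + A * B)⁻¹ * ((1 + A * B) - 1) := by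
        rw [Matrix.mul_sub, nonsing_inv_mul _ h, Matrix.mul_one]
    _ = A * (1 + B * A)⁻¹ * B := by
        rw [add_sub_cancel_left, mul_inv_one_add_mul_comm A B h, Matrix.mul_assoc]

theorem trace_one_sub_inv_one_add_mul_comm (A : Matrix m n α) (B : Matrix n m α)
    (h : IsUnit (1 + A * B).det) :
    trace (1 - (1 + A * B)⁻¹) = trace (1 - (1 + B * A)⁻¹) := by
  have h' : IsUnit (1 + B * A).det := det_one_add_mul_comm A B ▸ h
  rw [one_sub_inv_one_add_mul A B h, one_sub_inv_one_add_mul B A h',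
    mul_inv_one_add_mul_comm A B h, Matrix.mul_assoc, Matrix.mul_assoc, trace_mul_comm B,
    Matrix.mul_assoc]

theorem mul_self_mul_inv_one_add (X : Matrix n n α) (h : IsUnit (1 + X).det) :
    X * X * (1 + X)⁻¹ = X - (1 - (1 + X)⁻¹) := by
  have hX : X * (1 + X)⁻¹ = 1 - (1 + X)⁻¹ :=
    calc X * (1 + X)⁻¹ = ((1 + X) - 1) * (1 + X)⁻¹ := by rw [add_sub_cancel_left]
      _ = 1 - (1 + X)⁻¹ := by rw [Matrix.sub_mul, mul_nonsing_inv _ h, Matrix.one_mul]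
  rw [Matrix.mul_assoc, hX, Matrix.mul_sub, Matrix.mul_one, hX]

theorem trace_mul_add_mul_mul_inv_one_add_mul (A : Matrix n m α) (K : Matrix m n α)
    (B : Matrix m m α) (hB : trace B = trace (1 : Matrix m m α)) (h : IsUnit (1 + A * K).det) :
    trace (A * (K * A + B) * K * (1 + A * K)⁻¹)
      = trace (A * K) + trace ((1 - B) * (1 + K * A)⁻¹) := by
  have h' : IsUnit (1 + K * A).det := det_one_add_mul_comm A K ▸ h
  have hsplit : A * (K * A + B) * K * (1 + A * K)⁻¹
      = A * K * (A * K) * (1 + A * K)⁻¹ + A * (B * (K * (1 + A * K)⁻¹)) := by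
    simp only [Matrix.mul_add, Matrix.add_mul, Matrix.mul_assoc]
  have hcross : trace (A * (B * (K * (1 + A * K)⁻¹))) = trace (B * (1 - (1 + K * A)⁻¹)) := by
    rw [trace_mul_comm, one_sub_inv_one_add_mul K A h', Matrix.mul_assoc, Matrix.mul_assoc]
  rw [hsplit, trace_add, mul_self_mul_inv_one_add _ h, trace_sub,
    trace_one_sub_inv_one_add_mul_comm A K h, hcross, Matrix.mul_sub, Matrix.sub_mul,
    Matrix.mul_one, Matrix.one_mul, trace_sub, trace_sub, trace_sub, hB]
  ring

end OneAddMul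

section Isometry

variable {k m n R : Type*} [Fintype k] [Fintype m] [Fintype n] [DecidableEq m] [DecidableEq n]
  [CommRing R] [StarRing R]

theorem conjTranspose_mul_smul_add_smul_one_mul_of_isometry {Q : Matrix m n R}
    (hQ : Qᴴ * Q = 1) (X Y : Matrix n k R) (s t : R) :
    (Q * X)ᴴ * (s • (Q * Y * (Q * Y)ᴴ) + t • 1) * (Q * X)
      = Xᴴ * (s • (Y * Yᴴ) + t • 1) * X := by
  have hQQ : ∀ Z : Matrix n k R, Qᴴ * (Q * Z) = Z := fun Z => by
    rw [← Matrix.mul_assoc, hQ, Matrix.one_mul]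
  simp only [conjTranspose_mul, Matrix.mul_add, Matrix.add_mul, Matrix.mul_smul, Matrix.smul_mul,
    Matrix.mul_one, Matrix.mul_assoc, hQQ]

end Isometry

theorem inv_smul_add_inv_smul_one {n 𝕜 : Type*} [DecidableEq n] [Field 𝕜] {e : 𝕜} (he : e ≠ 0)
    (ν : 𝕜) (A : Matrix n n 𝕜) : ν⁻¹ • A + e⁻¹ • 1 = e⁻¹ • (1 + (e / ν) • A) := by
  rw [smul_add, smul_smul, div_eq_mul_inv, inv_mul_cancel_left₀ he, add_comm]

section Complex

variable {m n : Type*} [Fintype m] [Fintype n] [DecidableEq n]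

theorem posDef_one_add_ofReal_smul_conjTranspose_mul_self (K : Matrix m n ℂ) {c : ℝ}
    (hc : 0 ≤ c) : (1 + (c : ℂ) • (Kᴴ * K)).PosDef :=
  PosDef.one.add_posSemidef
    ((posSemidef_conjTranspose_mul_self K).smul (Complex.zero_le_real.mpr hc))

theorem PosDef.re_det_pos_and_im_det_eq_zero {X : Matrix n n ℂ} (hX : X.PosDef) :
    0 < X.det.re ∧ X.det.im = 0 :=
  RCLike.pos_iff.mp hX.det_pos

theorem log_re_det_ofReal_smul {r : ℝ} (hr : r ≠ 0) {X : Matrix n n ℂ} (hX : X.det.re ≠ 0) :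
    Real.log ((r : ℂ) • X).det.re = Fintype.card n * Real.log r + Real.log X.det.re := by
  rw [det_smul, ← Complex.ofReal_pow, Complex.re_ofReal_mul, Real.log_mul (pow_ne_zero _ hr) hX,
    Real.log_pow]

end Complex

end Matrix

theorem whitened_quadratic_form {m n : Type*} [Fintype m] [Fintype n] [DecidableEq m]
    [DecidableEq n] {Es N0 β : ℝ} (hEs : Es ≠ 0) (hN0 : N0 ≠ 0) (hβ : β = Es / N0)
    {Q H Fp : Matrix m n ℂ} {L Wp Lp Gp : Matrix n n ℂ} (hQ : Qᴴ * Q = 1) (hH : H = Q * L)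
    (hLp : Lp = Wp * L) (hGp : Gp = ((N0 : ℂ))⁻¹ • (Lpᴴ * Lp))
    (hFp : Fp = ((N0 : ℂ))⁻¹ • (Q * Wpᴴ * Lp)) (hP : IsUnit (1 + ((β : ℂ) • Lpᴴ) * Lp).det) :
    Fpᴴ * ((Es : ℂ) • (H * Hᴴ) + (N0 : ℂ) • 1) * Fp * (Gp + ((Es : ℂ))⁻¹ • 1)⁻¹
      = ((β : ℂ) • Lpᴴ) * (Lp * ((β : ℂ) • Lpᴴ) + Wp * Wpᴴ) * Lp
        * (1 + ((β : ℂ) • Lpᴴ) * Lp)⁻¹ := by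
  have hEs0 : (Es : ℂ) ≠ 0 := Complex.ofReal_ne_zero.mpr hEs
  have hEsN0 : (Es : ℂ) * (N0 : ℂ)⁻¹ = β := by rw [hβ, Complex.ofReal_div, div_eq_mul_inv]
  have hinv : (Gp + ((Es : ℂ))⁻¹ • 1)⁻¹ = (Es : ℂ) • (1 + ((β : ℂ) • Lpᴴ) * Lp)⁻¹ := by
    refine inv_eq_left_inv ?_
    rw [hGp, inv_smul_add_inv_smul_one hEs0, div_eq_mul_inv, hEsN0, ← smul_mul_assoc,
      smul_mul_smul_comm, nonsing_inv_mul _ hP, mul_inv_cancel₀ hEs0, one_smul]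
  have hWL : ∀ Z : Matrix n n ℂ, Wp * (L * Z) = Lp * Z := fun Z => by
    rw [← Matrix.mul_assoc, ← hLp]
  have hLW : ∀ Z : Matrix n n ℂ, Lᴴ * (Wpᴴ * Z) = Lpᴴ * Z := fun Z => by
    rw [← Matrix.mul_assoc, ← conjTranspose_mul, ← hLp]
  have hFp' : Fp = Q * ((N0 : ℂ)⁻¹ • (Wpᴴ * Lp)) := by
    rw [hFp, Matrix.mul_smul, Matrix.mul_assoc]
  rw [hinv, hFp', hH, conjTranspose_mul_smul_add_smul_one_mul_of_isometry hQ]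
  simp only [conjTranspose_smul, conjTranspose_mul, conjTranspose_conjTranspose, star_inv₀,
    Complex.star_def, Complex.conj_ofReal, Matrix.mul_add, Matrix.add_mul, Matrix.smul_mul,
    Matrix.mul_smul, smul_smul, Matrix.mul_assoc, hWL, hLW, smul_add,
    mul_inv_cancel₀ (Complex.ofReal_ne_zero.mpr hN0), mul_one]
  rw [← hEsN0]
  congr 2
  ring

theorem ILB_WLD_general (M N : ℕ)
    (Es N0 β : ℝ) (hEs : 0 < Es) (hN0 : 0 < N0) (hβ : β = Es / N0)
    (Q : Matrix (Fin M) (Fin N) ℂ) (hQ : Qᴴ * Q = 1)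
    (L Wp : Matrix (Fin N) (Fin N) ℂ)
    (hWp : Matrix.diagonal (fun k => (Wp * Wpᴴ) k k) = (1 : Matrix (Fin N) (Fin N) ℂ))
    (H : Matrix (Fin M) (Fin N) ℂ) (hH : H = Q * L)
    (Lp : Matrix (Fin N) (Fin N) ℂ) (hLp : Lp = Wp * L)
    (Gp : Matrix (Fin N) (Fin N) ℂ) (hGp : Gp = ((N0 : ℂ))⁻¹ • (Lpᴴ * Lp))
    (Fp : Matrix (Fin M) (Fin N) ℂ) (hFp : Fp = ((N0 : ℂ))⁻¹ • (Q * Wpᴴ * Lp)) :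
    ((Gp + ((Es : ℂ))⁻¹ • 1).PosDef ∧
      0 < (Gp + ((Es : ℂ))⁻¹ • 1).det.re ∧ (Gp + ((Es : ℂ))⁻¹ • 1).det.im = 0) ∧
    ((1 + (β : ℂ) • (Lpᴴ * Lp)).PosDef ∧
      0 < (1 + (β : ℂ) • (Lpᴴ * Lp)).det.re ∧ (1 + (β : ℂ) • (Lpᴴ * Lp)).det.im = 0) ∧
    ((1 + (β : ℂ) • (Lp * Lpᴴ)).PosDef ∧
      0 < (1 + (β : ℂ) • (Lp * Lpᴴ)).det.re ∧ (1 + (β : ℂ) • (Lp * Lpᴴ)).det.im = 0) ∧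
    Es * (Matrix.trace Gp).re + (N : ℝ) * Real.log Es +
        Real.log (Gp + ((Es : ℂ))⁻¹ • 1).det.re -
        (Matrix.trace (Fpᴴ * ((Es : ℂ) • (H * Hᴴ) + (N0 : ℂ) • 1) * Fp *
          (Gp + ((Es : ℂ))⁻¹ • 1)⁻¹)).re =
      Real.log (1 + (β : ℂ) • (Lpᴴ * Lp)).det.re -
        (Matrix.trace ((1 - Wp * Wpᴴ) * (1 + (β : ℂ) • (Lp * Lpᴴ))⁻¹)).re := by
  have hβ0 : 0 ≤ β := hβ ▸ (div_pos hEs hN0).le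
  have hPpd := posDef_one_add_ofReal_smul_conjTranspose_mul_self Lp hβ0
  have hRpd : (1 + (β : ℂ) • (Lp * Lpᴴ)).PosDef := by
    simpa only [conjTranspose_conjTranspose] using
      posDef_one_add_ofReal_smul_conjTranspose_mul_self Lpᴴ hβ0
  have hscale : Gp + ((Es : ℂ))⁻¹ • 1 = ((Es⁻¹ : ℝ) : ℂ) • (1 + (β : ℂ) • (Lpᴴ * Lp)) := by
    rw [hGp, inv_smul_add_inv_smul_one (Complex.ofReal_ne_zero.mpr hEs.ne'), hβ,
      Complex.ofReal_div, Complex.ofReal_inv]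
  have hGpd : (Gp + ((Es : ℂ))⁻¹ • 1).PosDef :=
    hscale ▸ hPpd.smul (Complex.zero_lt_real.mpr (inv_pos.mpr hEs))
  have hPunit : IsUnit (1 + ((β : ℂ) • Lpᴴ) * Lp).det :=
    (smul_mul_assoc (β : ℂ) Lpᴴ Lp).symm ▸ hPpd.det_pos.ne'.isUnit
  have htrB : trace (Wp * Wpᴴ) = trace (1 : Matrix (Fin N) (Fin N) ℂ) := by
    rw [← hWp, trace_diagonal]
    rfl
  have htrace : trace (Fpᴴ * ((Es : ℂ) • (H * Hᴴ) + (N0 : ℂ) • 1) * Fp *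
      (Gp + ((Es : ℂ))⁻¹ • 1)⁻¹)
        = Es * trace Gp + trace ((1 - Wp * Wpᴴ) * (1 + (β : ℂ) • (Lp * Lpᴴ))⁻¹) := by
    rw [whitened_quadratic_form hEs.ne' hN0.ne' hβ hQ hH hLp hGp hFp hPunit,
      trace_mul_add_mul_mul_inv_one_add_mul _ _ _ htrB hPunit, mul_smul_comm, smul_mul_assoc,
      trace_smul, hGp, trace_smul, smul_eq_mul, smul_eq_mul, hβ, Complex.ofReal_div]
    ring
  refine ⟨⟨hGpd, hGpd.re_det_pos_and_im_det_eq_zero⟩, ⟨hPpd, hPpd.re_det_pos_and_im_det_eq_zero⟩,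
    ⟨hRpd, hRpd.re_det_pos_and_im_det_eq_zero⟩, ?_⟩
  rw [htrace, hscale, log_re_det_ofReal_smul (inv_ne_zero hEs.ne')
    hPpd.re_det_pos_and_im_det_eq_zero.1.ne', Real.log_inv, Fintype.card_fin, Complex.add_re,
    Complex.re_ofReal_mul]
  ring

/-- **Theorem 1 (AIR lower bound of the WLD detector, Gaussian inputs).**
With `H = QL` (`QᴴQ = I`, `M ≥ N ≥ 1`), `L_p = W_p L` where the rows of `W_p` have unit
norm (`diag(W_p W_pᴴ) = I`), `G_p = (1/N₀) L_pᴴ L_p`, `F_p = (1/N₀) Q W_pᴴ L_p`, and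
`β = E_s/N₀`: the matrices `G_p + (1/E_s) I`, `I + β L_pᴴ L_p` and `I + β L_p L_pᴴ` are
positive definite Hermitian with positive real determinants, and
`E_s Re Tr G_p + N ln E_s + ln det(G_p + (1/E_s)I)
  − Re Tr(F_pᴴ (E_s H Hᴴ + N₀ I) F_p (G_p + (1/E_s)I)⁻¹)
 = ln det(I + β L_pᴴ L_p) − Re Tr((I − W_p W_pᴴ)(I + β L_p L_pᴴ)⁻¹)`. -/
theorem ILB_WLD (M N : ℕ) (hN : 1 ≤ N) (hMN : N ≤ M)
    (Es N0 β : ℝ) (hEs : 0 < Es) (hN0 : 0 < N0) (hβ : β = Es / N0)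
    (Q : Matrix (Fin M) (Fin N) ℂ) (hQ : Qᴴ * Q = 1)
    (L Wp : Matrix (Fin N) (Fin N) ℂ)
    (hWp : Matrix.diagonal (fun k => (Wp * Wpᴴ) k k) = (1 : Matrix (Fin N) (Fin N) ℂ))
    (H : Matrix (Fin M) (Fin N) ℂ) (hH : H = Q * L)
    (Lp : Matrix (Fin N) (Fin N) ℂ) (hLp : Lp = Wp * L)
    (Gp : Matrix (Fin N) (Fin N) ℂ) (hGp : Gp = ((N0 : ℂ))⁻¹ • (Lpᴴ * Lp))
    (Fp : Matrix (Fin M) (Fin N) ℂ) (hFp : Fp = ((N0 : ℂ))⁻¹ • (Q * Wpᴴ * Lp)) :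
    ((Gp + ((Es : ℂ))⁻¹ • 1).PosDef ∧
      0 < (Gp + ((Es : ℂ))⁻¹ • 1).det.re ∧ (Gp + ((Es : ℂ))⁻¹ • 1).det.im = 0) ∧
    ((1 + (β : ℂ) • (Lpᴴ * Lp)).PosDef ∧
      0 < (1 + (β : ℂ) • (Lpᴴ * Lp)).det.re ∧ (1 + (β : ℂ) • (Lpᴴ * Lp)).det.im = 0) ∧
    ((1 + (β : ℂ) • (Lp * Lpᴴ)).PosDef ∧
      0 < (1 + (β : ℂ) • (Lp * Lpᴴ)).det.re ∧ (1 + (β : ℂ) • (Lp * Lpᴴ)).det.im = 0) ∧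
    Es * (Matrix.trace Gp).re + (N : ℝ) * Real.log Es +
        Real.log (Gp + ((Es : ℂ))⁻¹ • 1).det.re -
        (Matrix.trace (Fpᴴ * ((Es : ℂ) • (H * Hᴴ) + (N0 : ℂ) • 1) * Fp *
          (Gp + ((Es : ℂ))⁻¹ • 1)⁻¹)).re =
      Real.log (1 + (β : ℂ) • (Lpᴴ * Lp)).det.re -
        (Matrix.trace ((1 - Wp * Wpᴴ) * (1 + (β : ℂ) • (Lp * Lpᴴ))⁻¹)).re :=
  ILB_WLD_general M N Es N0 β hEs hN0 hβ Q hQ L Wp hWp H hH Lp hLp Gp hGp Fp hFp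
end

section
/- Let M, N ≥ 1 and Es, N0 > 0 be reals. Let H ∈ ℂ^{M×N}, let H_a ∈ ℂ^{(M+N)×N} be the augmented channel, and for y ∈ ℂ^M let y_a ∈ ℂ^{M+N} be obtained by stacking (1/√N0)·y on top of the zero vector 0_N. Suppose H_a = Q_a·L_a with Q_a ∈ ℂ^{(M+N)×N}, Q_aᴴQ_a = I_N, and L_a ∈ ℂ^{N×N} invertible, and let W = (1/N0)·(L_aᴴL_a)⁻¹·Hᴴ. Then for every x ∈ ℂ^N: −(1/N0)·‖y − H·x‖² = (1/Es)·‖x‖² − ‖L_a·(W·y − x)‖² − ‖(I_{M+N} − Q_a·Q_aᴴ)·y_a‖². -/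
/-!
Stacking turns the regularised metric into a plain least-squares residual,
`‖y_a − H_a x‖² = (1/N₀)‖y − Hx‖² + (1/E_s)‖x‖²`. Since `Q_a` is an isometry,
`y_a − Q_a L_a x = Q_a (Q_aᴴ y_a − L_a x) + (I − Q_a Q_aᴴ) y_a` is an orthogonal sum, so
Pythagoras splits the residual. Finally `Q_aᴴ y_a = L_a W y`, because
`L_a (L_aᴴ L_a)⁻¹ H_aᴴ = Q_aᴴ` and `H_aᴴ y_a = (1/N₀) Hᴴ y`.
-/

open Matrix BigOperators

section EuclideanNorm

variable {ι κ : Type*} [Fintype ι] [Fintype κ]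

lemma enorm_nonneg (v : ι → ℂ) : 0 ≤ _root_.enorm v := Real.sqrt_nonneg _

lemma enorm_sq_eq_re_dotProduct (v : ι → ℂ) : _root_.enorm v ^ 2 = (star v ⬝ᵥ v).re := by
  rw [_root_.enorm, Real.sq_sqrt (by positivity)]
  simp [dotProduct, Complex.mul_re, Complex.sq_norm, Complex.normSq_apply]

lemma enorm_sq_sumElim (f : ι → ℂ) (g : κ → ℂ) :
    _root_.enorm (Sum.elim f g) ^ 2 = _root_.enorm f ^ 2 + _root_.enorm g ^ 2 := by
  simp only [_root_.enorm, Fintype.sum_sum_type, Sum.elim_inl, Sum.elim_inr]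
  rw [Real.sq_sqrt (by positivity), Real.sq_sqrt (by positivity), Real.sq_sqrt (by positivity)]

lemma enorm_smul_eq_norm_mul (c : ℂ) (v : ι → ℂ) :
    _root_.enorm (c • v) = ‖c‖ * _root_.enorm v := by
  simp only [_root_.enorm, Pi.smul_apply, smul_eq_mul, norm_mul, mul_pow, ← Finset.mul_sum]
  rw [Real.sqrt_mul (by positivity), Real.sqrt_sq (norm_nonneg c)]

lemma enorm_add_sq_of_dotProduct_eq_zero {u v : ι → ℂ} (h : star u ⬝ᵥ v = 0) :
    _root_.enorm (u + v) ^ 2 = _root_.enorm u ^ 2 + _root_.enorm v ^ 2 := by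
  have h' : star v ⬝ᵥ u = 0 := by rw [star_dotProduct, h, star_zero]
  simp only [enorm_sq_eq_re_dotProduct, star_add, add_dotProduct, dotProduct_add, h, h',
    add_zero, zero_add, Complex.add_re]

end EuclideanNorm

section Isometry

variable {ι κ : Type*} [Fintype ι] [Fintype κ] [DecidableEq ι] {Q : Matrix κ ι ℂ}

lemma enorm_mulVec_of_conjTranspose_mul_self (hQ : Qᴴ * Q = 1) (v : ι → ℂ) :
    _root_.enorm (Q *ᵥ v) = _root_.enorm v := by
  rw [← sq_eq_sq₀ (enorm_nonneg _) (enorm_nonneg _), enorm_sq_eq_re_dotProduct,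
    enorm_sq_eq_re_dotProduct, star_mulVec, dotProduct_mulVec, vecMul_vecMul, hQ, vecMul_one]

variable [DecidableEq κ]

lemma star_mulVec_dotProduct_one_sub_mul_conjTranspose_mulVec (hQ : Qᴴ * Q = 1)
    (v : ι → ℂ) (u : κ → ℂ) :
    star (Q *ᵥ v) ⬝ᵥ ((1 - Q * Qᴴ) *ᵥ u) = 0 := by
  rw [star_mulVec, dotProduct_mulVec, vecMul_vecMul, Matrix.mul_sub, Matrix.mul_one,
    ← Matrix.mul_assoc, hQ, Matrix.one_mul, sub_self, vecMul_zero, zero_dotProduct]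

lemma enorm_sub_mulVec_sq (hQ : Qᴴ * Q = 1) (u : κ → ℂ) (z : ι → ℂ) :
    _root_.enorm (u - Q *ᵥ z) ^ 2 =
      _root_.enorm (Qᴴ *ᵥ u - z) ^ 2 + _root_.enorm ((1 - Q * Qᴴ) *ᵥ u) ^ 2 := by
  have hsplit : u - Q *ᵥ z = Q *ᵥ (Qᴴ *ᵥ u - z) + (1 - Q * Qᴴ) *ᵥ u := by
    rw [mulVec_sub, mulVec_mulVec, sub_mulVec, one_mulVec]
    abel
  rw [hsplit, enorm_add_sq_of_dotProduct_eq_zero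
    (star_mulVec_dotProduct_one_sub_mul_conjTranspose_mulVec hQ _ _),
    enorm_mulVec_of_conjTranspose_mul_self hQ]

end Isometry

lemma mul_inv_conjTranspose_mul_self_mul_conjTranspose {R ι κ : Type*} [Fintype ι]
    [DecidableEq ι] [CommRing R] [StarRing R] {Q : Matrix κ ι R} {L : Matrix ι ι R}
    (hL : IsUnit L) :
    L * ((Lᴴ * L)⁻¹ * (Q * L)ᴴ) = Qᴴ := by
  have hLdet : IsUnit L.det := (isUnit_iff_isUnit_det L).mp hL
  have hLHdet : IsUnit Lᴴ.det :=
    (isUnit_iff_isUnit_det Lᴴ).mp ((isUnit_conjTranspose L).mpr hL)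
  rw [conjTranspose_mul, Matrix.mul_inv_rev, Matrix.mul_assoc,
    nonsing_inv_mul_cancel_left _ _ hLHdet, mul_nonsing_inv_cancel_left _ _ hLdet]

section AugmentedChannel

variable {m n : Type*} [Fintype m] [Fintype n] [DecidableEq n]

lemma conjTranspose_fromRows_smul_mulVec_sumElim (c d : ℂ) (H : Matrix m n ℂ) (y : m → ℂ) :
    (fromRows (c • H) (d • (1 : Matrix n n ℂ)))ᴴ *ᵥ Sum.elim (c • y) 0 =
      ((‖c‖ ^ 2 : ℝ) : ℂ) • (Hᴴ *ᵥ y) := by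
  rw [conjTranspose_fromRows_eq_fromCols_conjTranspose, fromCols_mulVec_sumElim]
  simp [conjTranspose_smul, smul_mulVec, mulVec_smul, smul_smul, Complex.mul_conj']

lemma enorm_sq_sumElim_sub_fromRows_mulVec (c d : ℂ) (H : Matrix m n ℂ) (y : m → ℂ)
    (x : n → ℂ) :
    _root_.enorm (Sum.elim (c • y) 0 - fromRows (c • H) (d • (1 : Matrix n n ℂ)) *ᵥ x) ^ 2 =
      ‖c‖ ^ 2 * _root_.enorm (y - H *ᵥ x) ^ 2 + ‖d‖ ^ 2 * _root_.enorm x ^ 2 := by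
  have hresidual : Sum.elim (c • y) 0 - fromRows (c • H) (d • (1 : Matrix n n ℂ)) *ᵥ x =
      Sum.elim (c • (y - H *ᵥ x)) (-d • x) := by
    rw [fromRows_mulVec]
    ext (i | i) <;> simp [smul_mulVec, mul_sub]
  rw [hresidual, enorm_sq_sumElim, enorm_smul_eq_norm_mul, enorm_smul_eq_norm_mul, norm_neg]
  ring

end AugmentedChannel

lemma norm_inv_ofReal_sqrt_sq {a : ℝ} (ha : 0 ≤ a) : ‖((√a : ℝ) : ℂ)⁻¹‖ ^ 2 = 1 / a := by
  rw [norm_inv, Complex.norm_real, Real.norm_of_nonneg (Real.sqrt_nonneg a), inv_pow,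
    Real.sq_sqrt ha, one_div]

theorem augmented_metric_identity_general (M N : ℕ)
    (Es N0 : ℝ) (hEs : 0 < Es) (hN0 : 0 < N0)
    (H : Matrix (Fin M) (Fin N) ℂ) (y : Fin M → ℂ)
    (Ha : Matrix (Fin M ⊕ Fin N) (Fin N) ℂ)
    (hHa : Ha = Matrix.fromRows ((((Real.sqrt N0 : ℝ) : ℂ))⁻¹ • H)
      ((((Real.sqrt Es : ℝ) : ℂ))⁻¹ • (1 : Matrix (Fin N) (Fin N) ℂ)))
    (ya : Fin M ⊕ Fin N → ℂ)
    (hya : ya = Sum.elim ((((Real.sqrt N0 : ℝ) : ℂ))⁻¹ • y) (0 : Fin N → ℂ))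
    (Qa : Matrix (Fin M ⊕ Fin N) (Fin N) ℂ) (La : Matrix (Fin N) (Fin N) ℂ)
    (hQa : Qaᴴ * Qa = 1) (hLa : IsUnit La) (hdecomp : Ha = Qa * La)
    (W : Matrix (Fin N) (Fin M) ℂ)
    (hW : W = ((N0 : ℂ))⁻¹ • ((Laᴴ * La)⁻¹ * Hᴴ)) :
    ∀ x : Fin N → ℂ,
      -(1 / N0) * _root_.enorm (y - H.mulVec x) ^ 2 =
        (1 / Es) * _root_.enorm x ^ 2 - _root_.enorm (La.mulVec (W.mulVec y - x)) ^ 2 -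
          _root_.enorm ((1 - Qa * Qaᴴ).mulVec ya) ^ 2 := by
  intro x
  have hfilter : La *ᵥ (W *ᵥ y) = Qaᴴ *ᵥ ya := by
    rw [← mul_inv_conjTranspose_mul_self_mul_conjTranspose (Q := Qa) hLa, ← hdecomp,
      ← mulVec_mulVec, ← mulVec_mulVec, hHa, hya, conjTranspose_fromRows_smul_mulVec_sumElim,
      norm_inv_ofReal_sqrt_sq hN0.le, hW, smul_mulVec, ← mulVec_mulVec, mulVec_smul]
    push_cast
    rw [one_div, mulVec_smul, mulVec_smul]
  have hresidual : _root_.enorm (ya - Ha *ᵥ x) ^ 2 =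
      1 / N0 * _root_.enorm (y - H *ᵥ x) ^ 2 + 1 / Es * _root_.enorm x ^ 2 := by
    rw [hHa, hya, enorm_sq_sumElim_sub_fromRows_mulVec, norm_inv_ofReal_sqrt_sq hN0.le,
      norm_inv_ofReal_sqrt_sq hEs.le]
  have hpythagoras := enorm_sub_mulVec_sq hQa ya (La *ᵥ x)
  rw [mulVec_mulVec, ← hdecomp, ← hfilter, ← mulVec_sub, hresidual] at hpythagoras
  linarith

/-- **Augmented metric identity.** With augmented channel
`H_a = [(1/√N₀)H ; (1/√E_s)I]`, augmented observation `y_a = [(1/√N₀)y ; 0]`,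
QL decomposition `H_a = Q_a L_a` (`Q_aᴴQ_a = I`, `L_a` invertible), and
`W = (1/N₀)(L_aᴴL_a)⁻¹Hᴴ` (the MMSE filter), one has, for every `x`:
`−(1/N₀)‖y − Hx‖² = (1/E_s)‖x‖² − ‖L_a(Wy − x)‖² − ‖(I − Q_aQ_aᴴ)y_a‖²`. -/
theorem augmented_metric_identity (M N : ℕ) (hM : 1 ≤ M) (hN : 1 ≤ N)
    (Es N0 : ℝ) (hEs : 0 < Es) (hN0 : 0 < N0)
    (H : Matrix (Fin M) (Fin N) ℂ) (y : Fin M → ℂ)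
    (Ha : Matrix (Fin M ⊕ Fin N) (Fin N) ℂ)
    (hHa : Ha = Matrix.fromRows ((((Real.sqrt N0 : ℝ) : ℂ))⁻¹ • H)
      ((((Real.sqrt Es : ℝ) : ℂ))⁻¹ • (1 : Matrix (Fin N) (Fin N) ℂ)))
    (ya : Fin M ⊕ Fin N → ℂ)
    (hya : ya = Sum.elim ((((Real.sqrt N0 : ℝ) : ℂ))⁻¹ • y) (0 : Fin N → ℂ))
    (Qa : Matrix (Fin M ⊕ Fin N) (Fin N) ℂ) (La : Matrix (Fin N) (Fin N) ℂ)
    (hQa : Qaᴴ * Qa = 1) (hLa : IsUnit La) (hdecomp : Ha = Qa * La)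
    (W : Matrix (Fin N) (Fin M) ℂ)
    (hW : W = ((N0 : ℂ))⁻¹ • ((Laᴴ * La)⁻¹ * Hᴴ)) :
    ∀ x : Fin N → ℂ,
      -(1 / N0) * _root_.enorm (y - H.mulVec x) ^ 2 =
        (1 / Es) * _root_.enorm x ^ 2 - _root_.enorm (La.mulVec (W.mulVec y - x)) ^ 2 -
          _root_.enorm ((1 - Qa * Qaᴴ).mulVec ya) ^ 2 :=
  augmented_metric_identity_general M N Es N0 hEs hN0 H y Ha hHa ya hya Qa La hQa hLa hdecomp W hW
end

section
/- Let M, N ≥ 1, let Es, N0 > 0 be reals with β = Es/N0, and let H ∈ ℂ^{M×N}. Let H_a ∈ ℂ^{(M+N)×N} be the augmented channel, and suppose H_a = Q_a·L_a with Q_a ∈ ℂ^{(M+N)×N}, Q_aᴴQ_a = I_N, and L_a ∈ ℂ^{N×N} invertible. Write Q_a in blocks as Q_{a1} (the top M×N block) stacked on Q_{a2} (the bottom N×N block). Then: (i) Q_{a2} = (1/√Es)·L_a⁻¹; and (ii) the MMSE filter W = (HᴴH + (N0/Es)·I_N)⁻¹·Hᴴ satisfies W = √β·Q_{a2}·Q_{a1}ᴴ.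 -/
open Matrix BigOperators

/-! Since `Q_a` has orthonormal columns, `H_aᴴH_a = L_aᴴL_a`, so the regularized Gram matrix
`HᴴH + (N₀/E_s)I = N₀ L_aᴴL_a` and `Hᴴ = √N₀ L_aᴴQ_{a1}ᴴ`; hence `W = (1/√N₀) L_a⁻¹Q_{a1}ᴴ`.
The bottom block of `H_a = Q_aL_a` reads `(1/√E_s) I = Q_{a2}L_a`, which is (i) and turns
`L_a⁻¹` into `√E_s Q_{a2}`. -/

namespace Matrix

theorem inv_smul_of_ne_zero {n K : Type*} [Fintype n] [DecidableEq n] [Field K] {k : K}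
    (hk : k ≠ 0) (A : Matrix n n K) : (k • A)⁻¹ = k⁻¹ • A⁻¹ := by
  by_cases hA : IsUnit A.det
  · exact inv_smul' A (Units.mk0 k hk) hA
  · have hkA : ¬IsUnit (k • A).det := by simpa [det_smul, hk] using hA
    rw [nonsing_inv_apply_not_isUnit _ hA, nonsing_inv_apply_not_isUnit _ hkA, smul_zero]

theorem eq_submatrix_mul_of_fromRows_eq_mul {m₁ m₂ n R : Type*} [Fintype n] [Semiring R]
    {A : Matrix m₁ n R} {B : Matrix m₂ n R} {Q : Matrix (m₁ ⊕ m₂) n R} {L : Matrix n n R}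
    (h : fromRows A B = Q * L) :
    A = Q.submatrix Sum.inl id * L ∧ B = Q.submatrix Sum.inr id * L := by
  rw [← fromRows_toRows Q, fromRows_mul] at h
  exact fromRows_inj h

theorem submatrix_inr_eq_smul_inv_of_fromRows_eq_mul {m n R : Type*} [Fintype n]
    [DecidableEq n] [CommRing R] {A : Matrix m n R} {c : R} {Q : Matrix (m ⊕ n) n R}
    {L : Matrix n n R} (h : fromRows A (c • 1) = Q * L) (hL : IsUnit L) :
    Q.submatrix Sum.inr id = c • L⁻¹ := by
  rw [← mul_nonsing_inv_cancel_right L (Q.submatrix Sum.inr id) ((isUnit_iff_isUnit_det L).mp hL),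
    ← (eq_submatrix_mul_of_fromRows_eq_mul h).2, smul_mul, Matrix.one_mul]

theorem conjTranspose_fromRows_mul_self {m₁ m₂ n R : Type*} [Fintype m₁] [Fintype m₂]
    [Semiring R] [StarRing R] (A : Matrix m₁ n R) (B : Matrix m₂ n R) :
    (fromRows A B)ᴴ * fromRows A B = Aᴴ * A + Bᴴ * B := by
  rw [conjTranspose_fromRows_eq_fromCols_conjTranspose, fromCols_mul_fromRows]

theorem inv_gram_mul_conjTranspose_of_fromRows_eq_mul {m₁ m₂ n R : Type*} [Fintype m₁]
    [Fintype m₂] [Fintype n] [DecidableEq n] [CommRing R] [StarRing R]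
    {A : Matrix m₁ n R} {B : Matrix m₂ n R} {Q : Matrix (m₁ ⊕ m₂) n R} {L : Matrix n n R}
    (h : fromRows A B = Q * L) (hQ : Qᴴ * Q = 1) (hL : IsUnit L) :
    (Aᴴ * A + Bᴴ * B)⁻¹ * Aᴴ = L⁻¹ * (Q.submatrix Sum.inl id)ᴴ := by
  have hdet : IsUnit L.det := (isUnit_iff_isUnit_det L).mp hL
  have hgram : Aᴴ * A + Bᴴ * B = Lᴴ * L := by
    rw [← conjTranspose_fromRows_mul_self, h, conjTranspose_mul, Matrix.mul_assoc,
      ← Matrix.mul_assoc Qᴴ, hQ, Matrix.one_mul]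
  rw [hgram, (eq_submatrix_mul_of_fromRows_eq_mul h).1, conjTranspose_mul, mul_inv_rev,
    Matrix.mul_assoc, ← Matrix.mul_assoc Lᴴ⁻¹,
    nonsing_inv_mul _ (by simpa only [det_conjTranspose] using hdet.star), Matrix.one_mul]

theorem inv_conjTranspose_mul_self_add_smul_one_mul_conjTranspose_of_fromRows_eq_mul
    {m n K : Type*} [Fintype m] [Fintype n] [DecidableEq n] [Field K] [StarRing K] {a c : K}
    (ha : a ≠ 0) (hc : c ≠ 0) (ha' : star a = a) (hc' : star c = c) {H : Matrix m n K}
    {Q : Matrix (m ⊕ n) n K} {L : Matrix n n K} (h : fromRows (a • H) (c • 1) = Q * L)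
    (hQ : Qᴴ * Q = 1) (hL : IsUnit L) :
    (Hᴴ * H + (c * c / (a * a)) • 1)⁻¹ * Hᴴ =
      (a / c) • (Q.submatrix Sum.inr id * (Q.submatrix Sum.inl id)ᴴ) := by
  have hgram : (a • H)ᴴ * (a • H) + (c • (1 : Matrix n n K))ᴴ * (c • 1) =
      (a * a) • (Hᴴ * H + (c * c / (a * a)) • 1) := by
    simp only [conjTranspose_smul, conjTranspose_one, ha', hc', Matrix.smul_mul, Matrix.mul_smul,
      Matrix.one_mul, smul_smul, smul_add, mul_div_cancel₀ _ (mul_ne_zero ha ha)]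
  have hLinv : L⁻¹ = c⁻¹ • Q.submatrix Sum.inr id := by
    rw [submatrix_inr_eq_smul_inv_of_fromRows_eq_mul h hL, smul_smul, inv_mul_cancel₀ hc,
      one_smul]
  have hridge := inv_gram_mul_conjTranspose_of_fromRows_eq_mul h hQ hL
  rw [hgram, inv_smul_of_ne_zero (mul_ne_zero ha ha), conjTranspose_smul, ha', Matrix.mul_smul,
    Matrix.smul_mul, smul_smul, hLinv, Matrix.smul_mul, _root_.mul_inv_rev,
    mul_inv_cancel_left₀ ha] at hridge
  rw [div_eq_mul_inv a c, ← smul_smul, ← hridge, smul_smul, mul_inv_cancel₀ ha, one_smul]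

end Matrix

theorem mmse_from_augmented_QL_general (M N : ℕ)
    (Es N0 β : ℝ) (hEs : 0 < Es) (hN0 : 0 < N0) (hβ : β = Es / N0)
    (H : Matrix (Fin M) (Fin N) ℂ)
    (Ha : Matrix (Fin M ⊕ Fin N) (Fin N) ℂ)
    (hHa : Ha = Matrix.fromRows ((((Real.sqrt N0 : ℝ) : ℂ))⁻¹ • H)
      ((((Real.sqrt Es : ℝ) : ℂ))⁻¹ • (1 : Matrix (Fin N) (Fin N) ℂ)))
    (Qa : Matrix (Fin M ⊕ Fin N) (Fin N) ℂ) (La : Matrix (Fin N) (Fin N) ℂ)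
    (hQa : Qaᴴ * Qa = 1) (hLa : IsUnit La) (hdecomp : Ha = Qa * La) :
    Qa.submatrix Sum.inr id = (((Real.sqrt Es : ℝ) : ℂ))⁻¹ • La⁻¹ ∧
    (Hᴴ * H + (((N0 / Es : ℝ)) : ℂ) • 1)⁻¹ * Hᴴ =
      (((Real.sqrt β : ℝ) : ℂ)) • (Qa.submatrix Sum.inr id * (Qa.submatrix Sum.inl id)ᴴ) := by
  set s : ℂ := ((Real.sqrt N0 : ℝ) : ℂ)
  set t : ℂ := ((Real.sqrt Es : ℝ) : ℂ)
  have hs : s ≠ 0 := Complex.ofReal_ne_zero.mpr (Real.sqrt_pos.mpr hN0).ne'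
  have ht : t ≠ 0 := Complex.ofReal_ne_zero.mpr (Real.sqrt_pos.mpr hEs).ne'
  have hss : s * s = N0 := by rw [← Complex.ofReal_mul, Real.mul_self_sqrt hN0.le]
  have htt : t * t = Es := by rw [← Complex.ofReal_mul, Real.mul_self_sqrt hEs.le]
  have hfac : fromRows (s⁻¹ • H) (t⁻¹ • 1) = Qa * La := hHa ▸ hdecomp
  refine ⟨submatrix_inr_eq_smul_inv_of_fromRows_eq_mul hfac hLa, ?_⟩
  have hreg : ((N0 / Es : ℝ) : ℂ) = t⁻¹ * t⁻¹ / (s⁻¹ * s⁻¹) := by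
    rw [← mul_inv, ← mul_inv, htt, hss]
    push_cast
    field_simp
  have hsqrtβ : ((Real.sqrt β : ℝ) : ℂ) = s⁻¹ / t⁻¹ := by
    rw [hβ, Real.sqrt_div' _ hN0.le, Complex.ofReal_div, inv_div_inv]
  rw [hreg, hsqrtβ]
  exact inv_conjTranspose_mul_self_add_smul_one_mul_conjTranspose_of_fromRows_eq_mul
    (inv_ne_zero hs) (inv_ne_zero ht) (by simp [s]) (by simp [t]) hfac hQa hLa

/-- **MMSE filter from the QL decomposition of the augmented channel.**
With `H_a = [(1/√N₀)H ; (1/√E_s)I] = Q_a L_a` (`Q_aᴴQ_a = I`, `L_a` invertible), writing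
`Q_{a1}`, `Q_{a2}` for the top `M×N` and bottom `N×N` blocks of `Q_a`:
(i) `Q_{a2} = (1/√E_s) L_a⁻¹`, and (ii) the MMSE filter
`W = (HᴴH + (N₀/E_s)I)⁻¹Hᴴ` equals `√β · Q_{a2} Q_{a1}ᴴ` with `β = E_s/N₀`. -/
theorem mmse_from_augmented_QL (M N : ℕ) (hM : 1 ≤ M) (hN : 1 ≤ N)
    (Es N0 β : ℝ) (hEs : 0 < Es) (hN0 : 0 < N0) (hβ : β = Es / N0)
    (H : Matrix (Fin M) (Fin N) ℂ)
    (Ha : Matrix (Fin M ⊕ Fin N) (Fin N) ℂ)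
    (hHa : Ha = Matrix.fromRows ((((Real.sqrt N0 : ℝ) : ℂ))⁻¹ • H)
      ((((Real.sqrt Es : ℝ) : ℂ))⁻¹ • (1 : Matrix (Fin N) (Fin N) ℂ)))
    (Qa : Matrix (Fin M ⊕ Fin N) (Fin N) ℂ) (La : Matrix (Fin N) (Fin N) ℂ)
    (hQa : Qaᴴ * Qa = 1) (hLa : IsUnit La) (hdecomp : Ha = Qa * La) :
    Qa.submatrix Sum.inr id = (((Real.sqrt Es : ℝ) : ℂ))⁻¹ • La⁻¹ ∧
    (Hᴴ * H + (((N0 / Es : ℝ)) : ℂ) • 1)⁻¹ * Hᴴ =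
      (((Real.sqrt β : ℝ) : ℂ)) • (Qa.submatrix Sum.inr id * (Qa.submatrix Sum.inl id)ᴴ) :=
  mmse_from_augmented_QL_general M N Es N0 β hEs hN0 hβ H Ha hHa Qa La hQa hLa hdecomp
end

section
/- Let H ∈ ℂ^{M×N}, let Es, N0 > 0 be reals, set α = N0/Es, and let W = (HᴴH + α·I_N)⁻¹·Hᴴ be the MMSE filter. Let B = (1/N0)·HᴴH + (1/Es)·I_N (the Gram matrix H_aᴴH_a of the augmented channel). Then B is positive definite, hence invertible, and Es·(I_N − W·H) = B⁻¹. -/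
/-!
Write `A = HᴴH + αI` with `α = N₀/E_s`. Then `B = N₀⁻¹ • A`, and `A` is positive definite as
a positive semidefinite matrix plus a positive multiple of the identity. Since
`HᴴH = A - αI`, we get `I - WH = I - A⁻¹HᴴH = αA⁻¹`, so `E_s(I - WH) = N₀A⁻¹ = B⁻¹`.
-/

open Matrix
open scoped ComplexOrder

theorem Matrix.one_sub_inv_add_smul_one_mul {n K : Type*} [Fintype n] [DecidableEq n] [Field K]
    {G : Matrix n n K} {a : K} (h : IsUnit (G + a • 1)) :
    1 - (G + a • 1)⁻¹ * G = a • (G + a • 1)⁻¹ := by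
  have hdet := (isUnit_iff_isUnit_det _).mp h
  calc 1 - (G + a • 1)⁻¹ * G = 1 - (G + a • 1)⁻¹ * ((G + a • 1) - a • 1) := by
        rw [add_sub_cancel_right]
    _ = a • (G + a • 1)⁻¹ := by
        rw [Matrix.mul_sub, nonsing_inv_mul _ hdet, Matrix.mul_smul, Matrix.mul_one, sub_sub_cancel]

/-- With `α = N₀/E_s`, MMSE filter `W = (HᴴH + αI)⁻¹Hᴴ`, and
`B = (1/N₀)HᴴH + (1/E_s)I` (the Gram matrix of the augmented channel), `B` is positive
definite (hence invertible) and `E_s(I − WH) = B⁻¹`. -/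
theorem mmse_gram_inverse (M N : ℕ) (H : Matrix (Fin M) (Fin N) ℂ)
    (Es N0 : ℝ) (hEs : 0 < Es) (hN0 : 0 < N0) :
    (((N0 : ℂ))⁻¹ • (Hᴴ * H) + ((Es : ℂ))⁻¹ • 1).PosDef ∧
    IsUnit (((N0 : ℂ))⁻¹ • (Hᴴ * H) + ((Es : ℂ))⁻¹ • 1) ∧
    (Es : ℂ) • ((1 : Matrix (Fin N) (Fin N) ℂ) -
        ((Hᴴ * H + (((N0 / Es : ℝ)) : ℂ) • 1)⁻¹ * Hᴴ) * H) =
      (((N0 : ℂ))⁻¹ • (Hᴴ * H) + ((Es : ℂ))⁻¹ • 1)⁻¹ := by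
  set A := Hᴴ * H + ((N0 / Es : ℝ) : ℂ) • 1
  have hA : A.PosDef := PosDef.posSemidef_add (posSemidef_conjTranspose_mul_self H)
    (PosDef.one.smul (by exact_mod_cast div_pos hN0 hEs))
  have hB_eq : (N0 : ℂ)⁻¹ • (Hᴴ * H) + (Es : ℂ)⁻¹ • 1 = (N0 : ℂ)⁻¹ • A := by
    rw [smul_add, smul_smul]
    congr 2
    push_cast
    field_simp
  have hB : ((N0 : ℂ)⁻¹ • A).PosDef := hA.smul (by simpa using hN0)
  rw [hB_eq, Matrix.mul_assoc, one_sub_inv_add_smul_one_mul hA.isUnit, smul_smul]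
  refine ⟨hB, hB.isUnit, (inv_eq_left_inv ?_).symm⟩
  rw [smul_mul_smul, nonsing_inv_mul _ ((isUnit_iff_isUnit_det _).mp hA.isUnit),
    show (Es : ℂ) * ((N0 / Es : ℝ) : ℂ) * (N0 : ℂ)⁻¹ = 1 by push_cast; field_simp, one_smul]
end

section
/- Let M, N ≥ 1, let Es, N0 > 0 be reals, set α = N0/Es, let H ∈ ℂ^{M×N}, and let W = (HᴴH + α·I_N)⁻¹·Hᴴ be the MMSE filter. Let L_a ∈ ℂ^{N×N} be invertible with L_aᴴL_a = (1/N0)·HᴴH + (1/Es)·I_N. Let W_ap ∈ ℂ^{N×N} be invertible with diag(W_ap·W_apᴴ) = I_N, and set L_ap = W_ap·L_a, G_ap = L_apᴴ·L_ap, and F_ap = Wᴴ·G_ap. Then G_ap is a positive-definite Hermitian matrix with positive real determinant, and the following identity holds: N − Es·Re Tr(G_ap) + 2·Es·Re Tr(F_apᴴ·H) + N·ln(Es) + ln det(G_ap) − Re Tr( F_apᴴ·(Es·H·Hᴴ + N0·I_M)·F_ap·G_ap⁻¹ ) = N·ln(Es) + ln det(L_apᴴ·L_ap). (This common value is the lower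 bound I_LB^AWLD on the achievable information rate of the AWLD detector with Gaussian inputs established in Theorem 2.) -/
/-!
With `A = HᴴH + αI` and `N₀ = E_s α`, the Gram condition says `A = N₀ L_aᴴL_a`. The push-through
identity `Hᴴ(HHᴴ + αI) = A Hᴴ` gives `W (E_s HHᴴ + N₀ I) Wᴴ = E_s WH`, and `WH = I - α A⁻¹` is
Hermitian, so all trace terms collapse to `N - E_s α Tr(G_ap A⁻¹)`. Writing
`G_ap = L_aᴴ (W_apᴴW_ap) L_a`, this trace is `Tr(W_apᴴW_ap) / N₀ = N / N₀` by the unit-row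
condition, so the trace terms sum to zero, while `ln det G_ap` is literally the
`ln det (L_apᴴL_ap)` on the right.
-/

open Matrix

namespace Matrix

variable {m n R : Type*} [Fintype m] [Fintype n] [DecidableEq n]

theorem trace_eq_card_of_diagonal_diag_eq_one [AddCommMonoidWithOne R] {A : Matrix n n R}
    (h : diagonal A.diag = 1) : A.trace = Fintype.card n :=
  calc A.trace = (diagonal A.diag).trace := (trace_diagonal _).symm
    _ = Fintype.card n := by rw [h, trace_one]

variable [CommRing R] [StarRing R]

theorem trace_conjTranspose_mul_mul_mul_inv {L : Matrix n n R} (hL : IsUnit L)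
    (B : Matrix n n R) : trace (Lᴴ * B * L * (Lᴴ * L)⁻¹) = trace B := by
  have hLL : L * L⁻¹ = 1 := mul_nonsing_inv L ((isUnit_iff_isUnit_det L).mp hL)
  calc trace (Lᴴ * B * L * (Lᴴ * L)⁻¹) = trace (Lᴴ * B * (L * L⁻¹) * Lᴴ⁻¹) := by
        simp only [mul_inv_rev, Matrix.mul_assoc]
    _ = trace B := by rw [hLL, Matrix.mul_one, trace_conj (M := Lᴴ) hL.star]

theorem trace_conjTranspose_mul_mul_mul_inv_smul {K : Type*} [Field K] [StarRing K]
    {L : Matrix n n K} (hL : IsUnit L) {c : K} (hc : c ≠ 0) (B : Matrix n n K) :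
    trace (Lᴴ * B * L * (c • (Lᴴ * L))⁻¹) = trace B / c := by
  have : Invertible c := invertibleOfNonzero hc
  have hLL : IsUnit (Lᴴ * L).det := (isUnit_iff_isUnit_det _).mp (hL.star.mul hL)
  rw [Matrix.inv_smul _ c hLL, invOf_eq_inv, Matrix.mul_smul, trace_smul,
    trace_conjTranspose_mul_mul_mul_inv hL, smul_eq_mul, inv_mul_eq_div]

noncomputable def mmseFilter (H : Matrix m n R) (a : R) : Matrix n m R := (Hᴴ * H + a • 1)⁻¹ * Hᴴ

variable {H : Matrix m n R} {a : R}

theorem conjTranspose_mul_mul_add_smul_one [DecidableEq m] (H : Matrix m n R) (a : R) :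
    Hᴴ * (H * Hᴴ + a • 1) = (Hᴴ * H + a • 1) * Hᴴ := by
  simp only [Matrix.mul_add, Matrix.add_mul, Matrix.mul_smul, Matrix.smul_mul, Matrix.mul_one,
    Matrix.one_mul, Matrix.mul_assoc]

theorem mmseFilter_mul_add_smul_one [DecidableEq m] (hA : IsUnit (Hᴴ * H + a • 1).det) :
    mmseFilter H a * (H * Hᴴ + a • 1) = Hᴴ := by
  rw [mmseFilter, Matrix.mul_assoc, conjTranspose_mul_mul_add_smul_one, ← Matrix.mul_assoc,
    nonsing_inv_mul _ hA, Matrix.one_mul]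

theorem one_sub_mmseFilter_mul (hA : IsUnit (Hᴴ * H + a • 1).det) :
    1 - mmseFilter H a * H = a • (Hᴴ * H + a • 1)⁻¹ := by
  have hAA : (Hᴴ * H + a • 1)⁻¹ * (Hᴴ * H + a • 1) = 1 := nonsing_inv_mul _ hA
  rw [Matrix.mul_add, Matrix.mul_smul, Matrix.mul_one] at hAA
  rw [mmseFilter, Matrix.mul_assoc]
  exact sub_eq_of_eq_add' hAA.symm

theorem isHermitian_mmseFilter_mul (ha : IsSelfAdjoint a) (hA : IsUnit (Hᴴ * H + a • 1).det) :
    (mmseFilter H a * H).IsHermitian := by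
  have hGram : (Hᴴ * H + a • 1).IsHermitian :=
    (isHermitian_conjTranspose_mul_self H).add (isHermitian_one.smul ha)
  rw [← sub_sub_cancel 1 (mmseFilter H a * H), one_sub_mmseFilter_mul hA]
  exact isHermitian_one.sub (hGram.inv.smul ha)

theorem mmseFilter_mul_add_smul_one_mul_conjTranspose [DecidableEq m] (ha : IsSelfAdjoint a)
    (hA : IsUnit (Hᴴ * H + a • 1).det) :
    mmseFilter H a * (H * Hᴴ + a • 1) * (mmseFilter H a)ᴴ = mmseFilter H a * H := by
  rw [mmseFilter_mul_add_smul_one hA, ← conjTranspose_mul, (isHermitian_mmseFilter_mul ha hA).eq]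

theorem trace_mmseFilter_weightedError [DecidableEq m] (ha : IsSelfAdjoint a)
    (hA : IsUnit (Hᴴ * H + a • 1).det) {G : Matrix n n R} (hG : G.IsHermitian)
    (hGdet : IsUnit G.det) (c : R) :
    c * trace G - 2 * c * trace (((mmseFilter H a)ᴴ * G)ᴴ * H)
        + trace (((mmseFilter H a)ᴴ * G)ᴴ * (c • (H * Hᴴ + a • 1)) * ((mmseFilter H a)ᴴ * G) * G⁻¹)
      = c * a * trace (G * (Hᴴ * H + a • 1)⁻¹) := by
  set W := mmseFilter H a
  have hF : (Wᴴ * G)ᴴ = G * W := by rw [conjTranspose_mul, conjTranspose_conjTranspose, hG.eq]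
  have hcross : trace ((Wᴴ * G)ᴴ * H) = trace (G * (W * H)) := by rw [hF, Matrix.mul_assoc]
  have hquad : trace ((Wᴴ * G)ᴴ * (c • (H * Hᴴ + a • 1)) * (Wᴴ * G) * G⁻¹)
      = c * trace (G * (W * H)) :=
    calc _ = trace (c • (G * (W * (H * Hᴴ + a • 1) * Wᴴ) * (G * G⁻¹))) := by
          rw [hF]
          simp only [Matrix.mul_assoc, Matrix.smul_mul, Matrix.mul_smul]
      _ = c * trace (G * (W * H)) := by
          rw [mmseFilter_mul_add_smul_one_mul_conjTranspose ha hA, mul_nonsing_inv _ hGdet,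
            Matrix.mul_one, trace_smul, smul_eq_mul]
  have hresidual : trace G - trace (G * (W * H)) = a * trace (G * (Hᴴ * H + a • 1)⁻¹) :=
    calc trace G - trace (G * (W * H)) = trace (G * (1 - W * H)) := by
          rw [Matrix.mul_sub, Matrix.mul_one, trace_sub]
      _ = a * trace (G * (Hᴴ * H + a • 1)⁻¹) := by
          rw [one_sub_mmseFilter_mul hA, Matrix.mul_smul, trace_smul, smul_eq_mul]
  linear_combination (-2 * c) * hcross + hquad + c * hresidual

end Matrix

open scoped ComplexOrder

theorem ILB_AWLD_general (M N : ℕ)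
    (Es N0 α : ℝ) (hEs : 0 < Es) (hN0 : 0 < N0) (hα : α = N0 / Es)
    (H : Matrix (Fin M) (Fin N) ℂ)
    (W : Matrix (Fin N) (Fin M) ℂ) (hW : W = (Hᴴ * H + (α : ℂ) • 1)⁻¹ * Hᴴ)
    (La : Matrix (Fin N) (Fin N) ℂ) (hLa : IsUnit La)
    (hGram : Laᴴ * La = ((N0 : ℂ))⁻¹ • (Hᴴ * H) + ((Es : ℂ))⁻¹ • 1)
    (Wap : Matrix (Fin N) (Fin N) ℂ) (hWap : IsUnit Wap)
    (hWapRows : Matrix.diagonal (fun k => (Wap * Wapᴴ) k k) = (1 : Matrix (Fin N) (Fin N) ℂ))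
    (Lap : Matrix (Fin N) (Fin N) ℂ) (hLap : Lap = Wap * La)
    (Gap : Matrix (Fin N) (Fin N) ℂ) (hGap : Gap = Lapᴴ * Lap)
    (Fap : Matrix (Fin M) (Fin N) ℂ) (hFap : Fap = Wᴴ * Gap) :
    (Gap.PosDef ∧ 0 < Gap.det.re ∧ Gap.det.im = 0) ∧
    (N : ℝ) - Es * (Matrix.trace Gap).re + 2 * Es * (Matrix.trace (Fapᴴ * H)).re +
        (N : ℝ) * Real.log Es + Real.log Gap.det.re -
        (Matrix.trace (Fapᴴ * ((Es : ℂ) • (H * Hᴴ) + (N0 : ℂ) • 1) * Fap * Gap⁻¹)).re =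
      (N : ℝ) * Real.log Es + Real.log (Lapᴴ * Lap).det.re := by
  replace hW : W = mmseFilter H (α : ℂ) := hW
  subst hLap hGap hFap hW
  have hG : ((Wap * La)ᴴ * (Wap * La)).PosDef :=
    PosDef.conjTranspose_mul_self _ (mulVec_injective_iff_isUnit.mpr (hWap.mul hLa))
  obtain ⟨hdet_re, hdet_im⟩ := Complex.pos_iff.mp hG.det_pos
  refine ⟨⟨hG, hdet_re, hdet_im.symm⟩, ?_⟩
  have hEs' : (Es : ℂ) ≠ 0 := Complex.ofReal_ne_zero.mpr hEs.ne'
  have hN0' : (N0 : ℂ) ≠ 0 := Complex.ofReal_ne_zero.mpr hN0.ne'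
  have hαc : (α : ℂ) = N0 / Es := by rw [hα]; push_cast; rfl
  have hA : Hᴴ * H + (α : ℂ) • 1 = (N0 : ℂ) • (Laᴴ * La) := by
    rw [hGram, smul_add, smul_smul, smul_smul, mul_inv_cancel₀ hN0', one_smul, hαc,
      div_eq_mul_inv]
  have hApd : (Hᴴ * H + (α : ℂ) • 1).PosDef := .posSemidef_add
    (posSemidef_conjTranspose_mul_self H)
    (.smul .one (Complex.zero_lt_real.mpr (hα ▸ by positivity)))
  have hAdet := (isUnit_iff_isUnit_det _).mp hApd.isUnit
  have hGA : trace ((Wap * La)ᴴ * (Wap * La) * (Hᴴ * H + (α : ℂ) • 1)⁻¹) = (N : ℂ) / N0 := by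
    have hG' : (Wap * La)ᴴ * (Wap * La) = Laᴴ * (Wapᴴ * Wap) * La := by
      simp only [conjTranspose_mul, Matrix.mul_assoc]
    rw [hA, hG', trace_conjTranspose_mul_mul_mul_inv_smul hLa hN0', trace_mul_comm,
      trace_eq_card_of_diagonal_diag_eq_one hWapRows, Fintype.card_fin]
  have hcov : (Es : ℂ) • (H * Hᴴ) + (N0 : ℂ) • 1 = (Es : ℂ) • (H * Hᴴ + (α : ℂ) • 1) := by
    rw [smul_add, smul_smul, hαc, mul_div_cancel₀ _ hEs']
  have hrhs : (Es : ℂ) * α * (N / N0) = N := by rw [hαc]; field_simp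
  have htwo : (2 : ℂ) * Es = ((2 * Es : ℝ) : ℂ) := by push_cast; rfl
  have herr := trace_mmseFilter_weightedError (Complex.conj_ofReal α) hAdet hG.isHermitian
    ((isUnit_iff_isUnit_det _).mp hG.isUnit) (Es : ℂ)
  rw [hGA, hrhs, ← hcov, htwo] at herr
  have herr_re := congrArg Complex.re herr
  simp only [Complex.add_re, Complex.sub_re, Complex.re_ofReal_mul, Complex.natCast_re] at herr_re
  linarith

/-- **Theorem 2 (AIR lower bound of the AWLD detector, Gaussian inputs).**
With `α = N₀/E_s`, MMSE filter `W = (HᴴH + αI)⁻¹Hᴴ`, `L_a` invertible with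
`L_aᴴL_a = (1/N₀)HᴴH + (1/E_s)I`, `W_ap` invertible with unit-norm rows
(`diag(W_ap W_apᴴ) = I`), `L_ap = W_ap L_a`, `G_ap = L_apᴴ L_ap`, and `F_ap = Wᴴ G_ap`:
`G_ap` is positive definite Hermitian with positive real determinant, and
`N − E_s Re Tr G_ap + 2E_s Re Tr(F_apᴴH) + N ln E_s + ln det G_ap
  − Re Tr(F_apᴴ(E_s HHᴴ + N₀ I)F_ap G_ap⁻¹) = N ln E_s + ln det(L_apᴴ L_ap)`. -/
theorem ILB_AWLD (M N : ℕ) (hM : 1 ≤ M) (hN : 1 ≤ N)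
    (Es N0 α : ℝ) (hEs : 0 < Es) (hN0 : 0 < N0) (hα : α = N0 / Es)
    (H : Matrix (Fin M) (Fin N) ℂ)
    (W : Matrix (Fin N) (Fin M) ℂ) (hW : W = (Hᴴ * H + (α : ℂ) • 1)⁻¹ * Hᴴ)
    (La : Matrix (Fin N) (Fin N) ℂ) (hLa : IsUnit La)
    (hGram : Laᴴ * La = ((N0 : ℂ))⁻¹ • (Hᴴ * H) + ((Es : ℂ))⁻¹ • 1)
    (Wap : Matrix (Fin N) (Fin N) ℂ) (hWap : IsUnit Wap)
    (hWapRows : Matrix.diagonal (fun k => (Wap * Wapᴴ) k k) = (1 : Matrix (Fin N) (Fin N) ℂ))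
    (Lap : Matrix (Fin N) (Fin N) ℂ) (hLap : Lap = Wap * La)
    (Gap : Matrix (Fin N) (Fin N) ℂ) (hGap : Gap = Lapᴴ * Lap)
    (Fap : Matrix (Fin M) (Fin N) ℂ) (hFap : Fap = Wᴴ * Gap) :
    (Gap.PosDef ∧ 0 < Gap.det.re ∧ Gap.det.im = 0) ∧
    (N : ℝ) - Es * (Matrix.trace Gap).re + 2 * Es * (Matrix.trace (Fapᴴ * H)).re +
        (N : ℝ) * Real.log Es + Real.log Gap.det.re -
        (Matrix.trace (Fapᴴ * ((Es : ℂ) • (H * Hᴴ) + (N0 : ℂ) • 1) * Fap * Gap⁻¹)).re =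
      (N : ℝ) * Real.log Es + Real.log (Lapᴴ * Lap).det.re :=
  ILB_AWLD_general M N Es N0 α hEs hN0 hα H W hW La hLa hGram Wap hWap hWapRows Lap hLap Gap hGap
    Fap hFap
end

section
/- Let M, N ≥ 2, 1 ≤ ν ≤ N−1, let Es, N0 > 0 be reals with β = Es/N0, and let H ∈ ℂ^{M×N}. Let L_a ∈ ℂ^{N×N} be lower-triangular with real positive diagonal entries satisfying L_aᴴL_a = (1/N0)·HᴴH + (1/Es)·I_N, partitioned as L_a = [[P_a, 0],[R_a, S_a]] with P_a of size ν×ν and S_a = [s_{kj}] of size (N−ν)×(N−ν). Let L_ap = [[P_a, 0],[Ω(S_a)·S_a⁻¹·R_a, Ω(S_a)]]. Then I_N + β·HᴴH and L_apᴴ·L_ap are positive-definite Hermitian matrices with positive real determinants, and ln det(I_N + β·HᴴH) − ( N·ln(Es) + ln det(L_apᴴ·L_ap) ) = Σ_{k=1}^{N−ν} ln( s_{kk}² · Σ_{j<k} |(S_a⁻¹)_{kj}|² + 1 ). -/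
/-!
By the Gram identity, `I + βHᴴH = E_s L_aᴴL_a`, so both determinants are squared moduli of
determinants of block lower-triangular matrices sharing the block `P_a`:
`det(I + βHᴴH) = E_s^N |det P_a|² |det S_a|²` and `det(L_apᴴL_ap) = |det P_a|² ∏_k w_k⁻¹`, where
`w_k = ∑_j |(S_a⁻¹)_{kj}|²`. The gap is therefore `∑_k ln(s_kk² w_k)`, and since `S_a⁻¹` is lower
triangular with diagonal `1/s_kk`, `s_kk² w_k = s_kk² ∑_{j<k} |(S_a⁻¹)_{kj}|² + 1`.
-/

open Matrix BigOperators
open scoped ComplexOrder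

namespace Matrix

variable {ι : Type*} [Fintype ι] [DecidableEq ι]

lemma det_conjTranspose_mul_self (A : Matrix ι ι ℂ) :
    (Aᴴ * A).det = (Complex.normSq A.det : ℂ) := by
  rw [det_mul, det_conjTranspose, Complex.normSq_eq_conj_mul_self, Complex.star_def]

lemma posDef_conjTranspose_mul_self_of_isUnit_det {A : Matrix ι ι ℂ} (hA : IsUnit A.det) :
    (Aᴴ * A).PosDef :=
  .conjTranspose_mul_self A (mulVec_injective_iff_isUnit.2 ((isUnit_iff_isUnit_det A).2 hA))

lemma PosDef.det_re_pos_and_im_eq_zero {A : Matrix ι ι ℂ} (hA : A.PosDef) :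
    0 < A.det.re ∧ A.det.im = 0 :=
  have h := Complex.pos_iff.1 hA.det_pos
  ⟨h.1, h.2.symm⟩

lemma sum_norm_sq_inv_apply_pos {K : Type*} [NormedField K] {S : Matrix ι ι K}
    (hS : IsUnit S.det) (k : ι) : 0 < ∑ j, ‖S⁻¹ k j‖ ^ 2 := by
  refine (Finset.sum_nonneg fun j _ => sq_nonneg _).lt_of_ne fun h => ?_
  have hrow : ∀ j, S⁻¹ k j = 0 := fun j => by
    simpa using (Finset.sum_eq_zero_iff_of_nonneg fun j _ => sq_nonneg ‖S⁻¹ k j‖).1 h.symm j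
  have hkk : (S⁻¹ * S) k k = 1 := by simp [nonsing_inv_mul S hS]
  simp [mul_apply, hrow] at hkk

lemma normSq_det_Omega (S : Matrix ι ι ℂ) :
    Complex.normSq (Omega S).det = (∏ k, ∑ j, ‖S⁻¹ k j‖ ^ 2)⁻¹ := by
  rw [Omega, det_diagonal, map_prod, ← Finset.prod_inv_distrib]
  refine Finset.prod_congr rfl fun k _ => ?_
  rw [Complex.normSq_ofReal, ← mul_inv, Real.mul_self_sqrt
    (Finset.sum_nonneg fun j _ => sq_nonneg _)]

lemma re_det_ofReal_smul_conjTranspose_mul_self (c : ℝ) (A : Matrix ι ι ℂ) :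
    ((c : ℂ) • (Aᴴ * A)).det.re = c ^ Fintype.card ι * Complex.normSq A.det := by
  rw [det_smul, det_conjTranspose_mul_self, ← Complex.ofReal_pow, ← Complex.ofReal_mul,
    Complex.ofReal_re]

lemma isUnit_det_Omega {S : Matrix ι ι ℂ} (hS : IsUnit S.det) : IsUnit (Omega S).det := by
  refine isUnit_iff_ne_zero.2 (Complex.normSq_eq_zero.not.1 ?_)
  rw [normSq_det_Omega]
  exact inv_ne_zero (Finset.prod_pos fun k _ => sum_norm_sq_inv_apply_pos hS k).ne'

lemma normSq_det_fromBlocks_eq_normSq_det_fromBlocks_Omega_mul {κ : Type*} [Fintype κ]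
    [DecidableEq κ] (P : Matrix κ κ ℂ) (R R' : Matrix ι κ ℂ) {S : Matrix ι ι ℂ}
    (hS : IsUnit S.det) :
    Complex.normSq (fromBlocks P 0 R S).det = Complex.normSq (fromBlocks P 0 R' (Omega S)).det *
      (Complex.normSq S.det * ∏ k, ∑ j, ‖S⁻¹ k j‖ ^ 2) := by
  rw [det_fromBlocks_zero₁₂, det_fromBlocks_zero₁₂, map_mul, map_mul, normSq_det_Omega]
  field_simp [(Finset.prod_pos fun k _ => sum_norm_sq_inv_apply_pos hS k).ne']

namespace IsLowerTriangular

variable [LinearOrder ι] {K : Type*}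

lemma isUnit_det_s14 [Field K] {S : Matrix ι ι K} (hS : S.IsLowerTriangular)
    (hdiag : ∀ i, S i i ≠ 0) : IsUnit S.det := by
  rw [det_of_isLowerTriangular S hS, isUnit_iff_ne_zero, Finset.prod_ne_zero_iff]
  exact fun i _ => hdiag i

lemma inv_s14 [Field K] {S : Matrix ι ι K} (hS : S.IsLowerTriangular) (hdiag : ∀ i, S i i ≠ 0) :
    S⁻¹.IsLowerTriangular :=
  have := S.invertibleOfIsUnitDet (hS.isUnit_det_s14 hdiag)
  blockTriangular_inv_of_blockTriangular hS

lemma inv_apply_self_s14 [Field K] {S : Matrix ι ι K} (hS : S.IsLowerTriangular)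
    (hdiag : ∀ i, S i i ≠ 0) (k : ι) : S⁻¹ k k = (S k k)⁻¹ := by
  have hkk : (S⁻¹ * S) k k = 1 := by simp [nonsing_inv_mul S (hS.isUnit_det_s14 hdiag)]
  rw [mul_apply, Finset.sum_eq_single k] at hkk
  · exact eq_inv_of_mul_eq_one_left hkk
  · intro j _ hjk
    rcases lt_or_gt_of_ne hjk with h | h
    · rw [hS h, mul_zero]
    · rw [hS.inv_s14 hdiag h, zero_mul]
  · simp

lemma sq_norm_mul_sum_norm_sq_inv_apply [NormedField K] {S : Matrix ι ι K}
    (hS : S.IsLowerTriangular) (hdiag : ∀ i, S i i ≠ 0) (k : ι) :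
    ‖S k k‖ ^ 2 * ∑ j, ‖S⁻¹ k j‖ ^ 2 =
      ‖S k k‖ ^ 2 * ∑ j ∈ Finset.univ.filter (· < k), ‖S⁻¹ k j‖ ^ 2 + 1 := by
  have hupper : ∑ j ∈ Finset.univ.filter (fun j => ¬ j < k), ‖S⁻¹ k j‖ ^ 2 = ‖S k k‖⁻¹ ^ 2 := by
    rw [Finset.sum_eq_single_of_mem k (by simp), hS.inv_apply_self_s14 hdiag, norm_inv]
    intro j hj hjk
    simp only [Finset.mem_filter, Finset.mem_univ, true_and, not_lt] at hj
    have hkj : k < j := lt_of_le_of_ne hj (Ne.symm hjk)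
    rw [hS.inv_s14 hdiag hkj, norm_zero, sq, zero_mul]
  rw [← Finset.sum_filter_add_sum_filter_not Finset.univ (· < k), hupper, mul_add, ← mul_pow,
    mul_inv_cancel₀ (norm_ne_zero_iff.2 (hdiag k)), one_pow]

lemma normSq_det_mul_prod_sum_norm_sq_inv_apply {S : Matrix ι ι ℂ} (hS : S.IsLowerTriangular)
    (hdiag : ∀ i, S i i ≠ 0) :
    Complex.normSq S.det * ∏ k, ∑ j, ‖S⁻¹ k j‖ ^ 2 =
      ∏ k, (‖S k k‖ ^ 2 * ∑ j ∈ Finset.univ.filter (· < k), ‖S⁻¹ k j‖ ^ 2 + 1) := by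
  rw [det_of_isLowerTriangular S hS, map_prod, ← Finset.prod_mul_distrib]
  refine Finset.prod_congr rfl fun k _ => ?_
  rw [Complex.normSq_eq_norm_sq, hS.sq_norm_mul_sum_norm_sq_inv_apply hdiag]

end IsLowerTriangular

end Matrix

lemma one_add_smul_eq_smul_conjTranspose_mul_self {n : Type*} [Fintype n] [DecidableEq n]
    {X L : Matrix n n ℂ} {Es N0 β : ℝ} (hEs : Es ≠ 0) (hβ : β = Es / N0)
    (hL : Lᴴ * L = (N0 : ℂ)⁻¹ • X + (Es : ℂ)⁻¹ • 1) :
    1 + (β : ℂ) • X = (Es : ℂ) • (Lᴴ * L) := by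
  have hEs' : (Es : ℂ) ≠ 0 := by exact_mod_cast hEs
  rw [hL, smul_add, smul_smul, smul_smul, mul_inv_cancel₀ hEs', one_smul, hβ, add_comm]
  push_cast; ring_nf

lemma Real.log_pow_mul_mul_sub_eq_log {a b c : ℝ} (n : ℕ) (ha : 0 < a) (hb : b ≠ 0)
    (hc : c ≠ 0) : Real.log (a ^ n * (b * c)) - (n * Real.log a + Real.log b) = Real.log c := by
  rw [Real.log_mul (pow_pos ha n).ne' (mul_ne_zero hb hc), Real.log_mul hb hc, Real.log_pow]
  ring

theorem gap_to_capacity_AWLD_general (M ν m : ℕ)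
    (Es N0 β : ℝ) (hEs : 0 < Es) (hβ : β = Es / N0)
    (H : Matrix (Fin M) (Fin ν ⊕ Fin m) ℂ)
    (Pa : Matrix (Fin ν) (Fin ν) ℂ) (Ra : Matrix (Fin m) (Fin ν) ℂ)
    (Sa : Matrix (Fin m) (Fin m) ℂ)
    (hPa : ∀ i j : Fin ν, i < j → Pa i j = 0)
    (hPadiag : ∀ i : Fin ν, ∃ r : ℝ, 0 < r ∧ Pa i i = (r : ℂ))
    (hSa : ∀ i j : Fin m, i < j → Sa i j = 0)
    (hSadiag : ∀ i : Fin m, ∃ r : ℝ, 0 < r ∧ Sa i i = (r : ℂ))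
    (hGram : (Matrix.fromBlocks Pa 0 Ra Sa)ᴴ * Matrix.fromBlocks Pa 0 Ra Sa =
      ((N0 : ℂ))⁻¹ • (Hᴴ * H) + ((Es : ℂ))⁻¹ • 1)
    (Lap : Matrix (Fin ν ⊕ Fin m) (Fin ν ⊕ Fin m) ℂ)
    (hLap : Lap = Matrix.fromBlocks Pa 0 (Omega Sa * Sa⁻¹ * Ra) (Omega Sa)) :
    ((1 + (β : ℂ) • (Hᴴ * H)).PosDef ∧
      0 < (1 + (β : ℂ) • (Hᴴ * H)).det.re ∧ (1 + (β : ℂ) • (Hᴴ * H)).det.im = 0) ∧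
    ((Lapᴴ * Lap).PosDef ∧
      0 < (Lapᴴ * Lap).det.re ∧ (Lapᴴ * Lap).det.im = 0) ∧
    Real.log (1 + (β : ℂ) • (Hᴴ * H)).det.re -
        (((ν + m : ℕ) : ℝ) * Real.log Es + Real.log (Lapᴴ * Lap).det.re) =
      ∑ k : Fin m, Real.log
        ((Sa k k).re ^ 2 *
            (∑ j ∈ Finset.univ.filter (fun j : Fin m => j < k), ‖Sa⁻¹ k j‖ ^ 2) + 1) := by
  set La := fromBlocks Pa 0 Ra Sa
  have ne_zero_of_pos_real : ∀ z : ℂ, (∃ r : ℝ, 0 < r ∧ z = r) → z ≠ 0 := by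
    rintro z ⟨r, hr, rfl⟩; exact_mod_cast hr.ne'
  have hPa_lower : Pa.IsLowerTriangular := fun i j h => hPa i j h
  have hSa_lower : Sa.IsLowerTriangular := fun i j h => hSa i j h
  have hPa_unit := hPa_lower.isUnit_det_s14 fun i => ne_zero_of_pos_real _ (hPadiag i)
  have hSa_ne : ∀ k, Sa k k ≠ 0 := fun k => ne_zero_of_pos_real _ (hSadiag k)
  have hSa_unit := hSa_lower.isUnit_det_s14 hSa_ne
  have hSa_norm : ∀ k, ‖Sa k k‖ = (Sa k k).re := fun k => by
    obtain ⟨r, hr, he⟩ := hSadiag k; simp [he, abs_of_pos hr]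
  have hLa_unit : IsUnit La.det := det_fromBlocks_zero₁₂ Pa Ra Sa ▸ hPa_unit.mul hSa_unit
  have hLap_unit : IsUnit Lap.det :=
    hLap ▸ det_fromBlocks_zero₁₂ Pa _ (Omega Sa) ▸ hPa_unit.mul (isUnit_det_Omega hSa_unit)
  have hEq := one_add_smul_eq_smul_conjTranspose_mul_self hEs.ne' hβ hGram
  have hPD : (1 + (β : ℂ) • (Hᴴ * H)).PosDef := hEq ▸
    (posDef_conjTranspose_mul_self_of_isUnit_det hLa_unit).smul (by exact_mod_cast hEs)
  have hPDp := posDef_conjTranspose_mul_self_of_isUnit_det hLap_unit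
  refine ⟨⟨hPD, hPD.det_re_pos_and_im_eq_zero⟩, ⟨hPDp, hPDp.det_re_pos_and_im_eq_zero⟩, ?_⟩
  have hgap : (1 + (β : ℂ) • (Hᴴ * H)).det.re = Es ^ (ν + m) * ((Lapᴴ * Lap).det.re *
      ∏ k, ((Sa k k).re ^ 2 *
        (∑ j ∈ Finset.univ.filter (fun j : Fin m => j < k), ‖Sa⁻¹ k j‖ ^ 2) + 1)) := by
    rw [hEq, re_det_ofReal_smul_conjTranspose_mul_self, det_conjTranspose_mul_self,
      Complex.ofReal_re, normSq_det_fromBlocks_eq_normSq_det_fromBlocks_Omega_mul Pa Ra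
        (Omega Sa * Sa⁻¹ * Ra) hSa_unit, ← hLap,
      hSa_lower.normSq_det_mul_prod_sum_norm_sq_inv_apply hSa_ne]
    simp only [Fintype.card_sum, Fintype.card_fin, hSa_norm]
  rw [hgap, Real.log_pow_mul_mul_sub_eq_log _ hEs hPDp.det_re_pos_and_im_eq_zero.1.ne'
    (by positivity), Real.log_prod fun k _ => by positivity]

/-- **Gap to AWGN capacity of the AWLD detector.** With `N = ν + m` (`ν, m ≥ 1`, `M ≥ 2`),
`β = E_s/N₀`, `L_a = [[P_a,0],[R_a,S_a]]` lower-triangular with real positive diagonal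
satisfying `L_aᴴL_a = (1/N₀)HᴴH + (1/E_s)I`, and punctured matrix
`L_ap = [[P_a,0],[Ω(S_a)S_a⁻¹R_a, Ω(S_a)]]`: both `I + βHᴴH` and `L_apᴴL_ap` are positive
definite Hermitian with positive real determinants, and
`ln det(I + βHᴴH) − (N ln E_s + ln det(L_apᴴL_ap))
  = ∑_{k=1}^{N−ν} ln(s_{kk}² ∑_{j<k} |(S_a⁻¹)_{kj}|² + 1)`. -/
theorem gap_to_capacity_AWLD (M ν m : ℕ) (hM : 2 ≤ M) (hν : 1 ≤ ν) (hm : 1 ≤ m)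
    (Es N0 β : ℝ) (hEs : 0 < Es) (hN0 : 0 < N0) (hβ : β = Es / N0)
    (H : Matrix (Fin M) (Fin ν ⊕ Fin m) ℂ)
    (Pa : Matrix (Fin ν) (Fin ν) ℂ) (Ra : Matrix (Fin m) (Fin ν) ℂ)
    (Sa : Matrix (Fin m) (Fin m) ℂ)
    (hPa : ∀ i j : Fin ν, i < j → Pa i j = 0)
    (hPadiag : ∀ i : Fin ν, ∃ r : ℝ, 0 < r ∧ Pa i i = (r : ℂ))
    (hSa : ∀ i j : Fin m, i < j → Sa i j = 0)
    (hSadiag : ∀ i : Fin m, ∃ r : ℝ, 0 < r ∧ Sa i i = (r : ℂ))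
    (hGram : (Matrix.fromBlocks Pa 0 Ra Sa)ᴴ * Matrix.fromBlocks Pa 0 Ra Sa =
      ((N0 : ℂ))⁻¹ • (Hᴴ * H) + ((Es : ℂ))⁻¹ • 1)
    (Lap : Matrix (Fin ν ⊕ Fin m) (Fin ν ⊕ Fin m) ℂ)
    (hLap : Lap = Matrix.fromBlocks Pa 0 (Omega Sa * Sa⁻¹ * Ra) (Omega Sa)) :
    ((1 + (β : ℂ) • (Hᴴ * H)).PosDef ∧
      0 < (1 + (β : ℂ) • (Hᴴ * H)).det.re ∧ (1 + (β : ℂ) • (Hᴴ * H)).det.im = 0) ∧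
    ((Lapᴴ * Lap).PosDef ∧
      0 < (Lapᴴ * Lap).det.re ∧ (Lapᴴ * Lap).det.im = 0) ∧
    Real.log (1 + (β : ℂ) • (Hᴴ * H)).det.re -
        (((ν + m : ℕ) : ℝ) * Real.log Es + Real.log (Lapᴴ * Lap).det.re) =
      ∑ k : Fin m, Real.log
        ((Sa k k).re ^ 2 *
            (∑ j ∈ Finset.univ.filter (fun j : Fin m => j < k), ‖Sa⁻¹ k j‖ ^ 2) + 1) :=
  gap_to_capacity_AWLD_general M ν m Es N0 β hEs hβ H Pa Ra Sa hPa hPadiag hSa hSadiag hGram Lap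
    hLap
end

section
/- Let N ≥ 1 and let U, V ∈ ℂ^{N×N} be invertible. Then U·Uᴴ and V·Vᴴ are positive-definite Hermitian matrices with positive real determinants, and the real-valued function f(U, V) = ln det(U·Uᴴ) − ‖U·V‖_F² satisfies f(U, V) ≤ −ln det(V·Vᴴ) − N, with equality when U = V⁻¹. In other words, U = V⁻¹ maximizes U ↦ f(U, V) over invertible matrices, and the maximum value is −ln det(V·Vᴴ) − N (equivalently, −Σ_{k=1}^N ln(ṽ_{kk}²) − N, where ṽ_{kk} are the diagonal entries of a lower-triangular Cholesky factor L̃ of V·Vᴴ = L̃·L̃ᴴ with positive diagonal). -/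
/-!
Put `W = U V`. Then `det (W Wᴴ) = det (U Uᴴ) det (V Vᴴ)` and `‖W‖_F² = tr (W Wᴴ)`, so the
inequality is `log det P - tr P ≤ -N` for the positive definite `P = W Wᴴ`. In terms of the
eigenvalues `λᵢ > 0` of `P` this is `∑ᵢ (log λᵢ - λᵢ) ≤ -N`, i.e. `log x ≤ x - 1` summed over the
spectrum. For `U = V⁻¹` we get `W = 1`, where both sides agree.
-/

open Matrix
open scoped ComplexOrder

namespace Matrix

variable {m n 𝕜 : Type*} [Fintype m] [Fintype n] [RCLike 𝕜]

theorem sum_sum_norm_sq_eq_re_trace_mul_conjTranspose (A : Matrix m n 𝕜) :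
    ∑ i, ∑ j, ‖A i j‖ ^ 2 = RCLike.re (A * Aᴴ).trace := by
  simp only [trace, diag, mul_apply, conjTranspose_apply, RCLike.star_def, RCLike.mul_conj,
    map_sum]
  norm_cast

theorem det_mul_conjTranspose_self [DecidableEq n] (A : Matrix n n 𝕜) :
    (A * Aᴴ).det = ((‖A.det‖ ^ 2 : ℝ) : 𝕜) := by
  rw [det_mul, det_conjTranspose, RCLike.star_def, RCLike.mul_conj]
  norm_cast

theorem PosDef.log_re_det_sub_re_trace_le [DecidableEq n] {A : Matrix n n 𝕜} (hA : A.PosDef) :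
    Real.log (RCLike.re A.det) - RCLike.re A.trace ≤ -Fintype.card n := by
  have hpos := hA.eigenvalues_pos
  rw [hA.isHermitian.det_eq_prod_eigenvalues, hA.isHermitian.trace_eq_sum_eigenvalues,
    ← RCLike.ofReal_prod, ← RCLike.ofReal_sum, RCLike.ofReal_re, RCLike.ofReal_re,
    Real.log_prod fun i _ => (hpos i).ne', ← Finset.sum_sub_distrib]
  calc ∑ i, (Real.log (hA.isHermitian.eigenvalues i) - hA.isHermitian.eigenvalues i)
      ≤ ∑ _i : n, (-1 : ℝ) :=
        Finset.sum_le_sum fun i _ => by linarith [Real.log_le_sub_one_of_pos (hpos i)]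
    _ = -Fintype.card n := by simp

end Matrix

theorem trace_formula_general (N : ℕ) (U V : Matrix (Fin N) (Fin N) ℂ)
    (hU : IsUnit U) (hV : IsUnit V) :
    ((U * Uᴴ).PosDef ∧ 0 < (U * Uᴴ).det.re ∧ (U * Uᴴ).det.im = 0) ∧
    ((V * Vᴴ).PosDef ∧ 0 < (V * Vᴴ).det.re ∧ (V * Vᴴ).det.im = 0) ∧
    (Real.log (U * Uᴴ).det.re - ∑ k : Fin N, ∑ j : Fin N, ‖(U * V) k j‖ ^ 2 ≤
      -Real.log (V * Vᴴ).det.re - N) ∧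
    (Real.log (V⁻¹ * (V⁻¹)ᴴ).det.re - ∑ k : Fin N, ∑ j : Fin N, ‖(V⁻¹ * V) k j‖ ^ 2 =
      -Real.log (V * Vᴴ).det.re - N) := by
  have posDef {A : Matrix (Fin N) (Fin N) ℂ} (hA : IsUnit A) : (A * Aᴴ).PosDef :=
    .mul_conjTranspose_self A (vecMul_injective_of_isUnit hA)
  have re_det (A : Matrix (Fin N) (Fin N) ℂ) : (A * Aᴴ).det.re = ‖A.det‖ ^ 2 := by
    rw [det_mul_conjTranspose_self]; exact RCLike.ofReal_re (K := ℂ) _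
  have det_ne {A : Matrix (Fin N) (Fin N) ℂ} (hA : IsUnit A) : ‖A.det‖ ^ 2 ≠ 0 := by
    simpa using ((isUnit_iff_isUnit_det A).mp hA).ne_zero
  have det_facts {A : Matrix (Fin N) (Fin N) ℂ} (hA : IsUnit A) :
      (A * Aᴴ).PosDef ∧ 0 < (A * Aᴴ).det.re ∧ (A * Aᴴ).det.im = 0 := by
    obtain ⟨hre, him⟩ := Complex.pos_iff.mp (posDef hA).det_pos
    exact ⟨posDef hA, hre, him.symm⟩
  refine ⟨det_facts hU, det_facts hV, ?_, ?_⟩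
  · have key := (posDef (hU.mul hV)).log_re_det_sub_re_trace_le
    rw [← sum_sum_norm_sq_eq_re_trace_mul_conjTranspose, RCLike.re_to_complex, re_det, det_mul,
      norm_mul, mul_pow, Real.log_mul (det_ne hU) (det_ne hV), Fintype.card_fin] at key
    rw [re_det, re_det]
    linarith
  · have hVinv : V⁻¹ * V = 1 := nonsing_inv_mul V ((isUnit_iff_isUnit_det V).mp hV)
    rw [hVinv, sum_sum_norm_sq_eq_re_trace_mul_conjTranspose, re_det, re_det, det_nonsing_inv,
      Ring.inverse_eq_inv', norm_inv, inv_pow, Real.log_inv]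
    simp

/-- **Lemma 5 (trace formula).** For invertible `U, V ∈ ℂ^{N×N}` (`N ≥ 1`), the matrices
`UUᴴ` and `VVᴴ` are positive definite Hermitian with positive real determinants, and the
function `f(U,V) = ln det(UUᴴ) − ‖UV‖_F²` satisfies `f(U,V) ≤ −ln det(VVᴴ) − N`, with
equality when `U = V⁻¹`. -/
theorem trace_formula (N : ℕ) (hN : 1 ≤ N) (U V : Matrix (Fin N) (Fin N) ℂ)
    (hU : IsUnit U) (hV : IsUnit V) :
    ((U * Uᴴ).PosDef ∧ 0 < (U * Uᴴ).det.re ∧ (U * Uᴴ).det.im = 0) ∧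
    ((V * Vᴴ).PosDef ∧ 0 < (V * Vᴴ).det.re ∧ (V * Vᴴ).det.im = 0) ∧
    (Real.log (U * Uᴴ).det.re - ∑ k : Fin N, ∑ j : Fin N, ‖(U * V) k j‖ ^ 2 ≤
      -Real.log (V * Vᴴ).det.re - N) ∧
    (Real.log (V⁻¹ * (V⁻¹)ᴴ).det.re - ∑ k : Fin N, ∑ j : Fin N, ‖(V⁻¹ * V) k j‖ ^ 2 =
      -Real.log (V * Vᴴ).det.re - N) :=
  trace_formula_general N U V hU hV
end

section
/- Let N ≥ 2 and 1 ≤ ν ≤ N−1. Let L_a = [[P, 0],[R, S]] ∈ ℂ^{N×N}, where P ∈ ℂ^{ν×ν} is lower-triangular and invertible, S ∈ ℂ^{(N−ν)×(N−ν)} is lower-triangular and invertible, and R ∈ ℂ^{(N−ν)×ν} is arbitrary. For an invertible J ∈ ℂ^{N×N} define Ĩ(J) = ln det(Jᴴ·J) − ‖J·L_a⁻¹‖_F². Let J_opt = [[P, 0],[Ω(S)·S⁻¹·R, Ω(S)]]. Then J_opt is invertible of the punctured form, and for every invertible J of the punctured form J = [[J₁, 0],[J₂, J₃]] — with J₁ ∈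 ℂ^{ν×ν} lower-triangular, J₂ ∈ ℂ^{(N−ν)×ν} arbitrary, and J₃ a real diagonal (N−ν)×(N−ν) matrix — one has Ĩ(J) ≤ Ĩ(J_opt), and moreover Ĩ(J_opt) = ln det(Pᴴ·P) + ln det(Ω(S)²) − N. -/
/-!
Writing `J L_a⁻¹` blockwise, `Ĩ(J)` splits into three independent pieces. The first,
`log |det J₁|² - ‖J₁ P⁻¹‖²`, becomes `log |det P|² + log |det T|² - ‖T‖²` with `T = J₁ P⁻¹`
lower triangular, and `log x ≤ x - 1` on the diagonal of `T` bounds it by `log |det P|² - ν`.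
The second is `∑ₖ (log dₖ² - dₖ² cₖ)`, with `cₖ` the squared norm of row `k` of `S⁻¹`, and each
term is at most `log cₖ⁻¹ - 1`, with equality at `dₖ² = cₖ⁻¹`. The third is
`-‖J₂ P⁻¹ - D S⁻¹ R P⁻¹‖² ≤ 0`, which vanishes at `J₂ = D S⁻¹ R`. The matrix `J_opt`
attains all three bounds.
-/

open Matrix BigOperators

/-- The objective `Ĩ(J) = ln det(JᴴJ) − ‖J L_a⁻¹‖_F²` (for invertible `J`, `JᴴJ` is
positive definite Hermitian, so its determinant is a positive real and `ln det` is taken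
of its real part). -/
noncomputable def Itilde {ι : Type*} [Fintype ι] [DecidableEq ι]
    (La J : Matrix ι ι ℂ) : ℝ :=
  Real.log (Jᴴ * J).det.re - ∑ k, ∑ j, ‖(J * La⁻¹) k j‖ ^ 2

section Frobenius

variable {l m n o : Type*} [Fintype n]

noncomputable def rowNormSq (A : Matrix m n ℂ) (i : m) : ℝ := ∑ j, ‖A i j‖ ^ 2

lemma rowNormSq_nonneg (A : Matrix m n ℂ) (i : m) : 0 ≤ rowNormSq A i :=
  Finset.sum_nonneg fun _ _ => sq_nonneg _

lemma rowNormSq_pos_of_isUnit [DecidableEq n] {A : Matrix n n ℂ} (hA : IsUnit A) (i : n) :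
    0 < rowNormSq A i := by
  refine (rowNormSq_nonneg A i).lt_of_ne fun h => ?_
  have hrow : ∀ j, A i j = 0 := fun j => by
    simpa using (Finset.sum_eq_zero_iff_of_nonneg fun j _ => sq_nonneg ‖A i j‖).mp h.symm j
      (Finset.mem_univ j)
  exact ((isUnit_iff_isUnit_det A).mp hA).ne_zero (det_eq_zero_of_row_eq_zero i hrow)

variable [Fintype m]

noncomputable def frobeniusNormSq (A : Matrix m n ℂ) : ℝ := ∑ i, rowNormSq A i

lemma frobeniusNormSq_nonneg (A : Matrix m n ℂ) : 0 ≤ frobeniusNormSq A :=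
  Finset.sum_nonneg fun i _ => rowNormSq_nonneg A i

@[simp]
lemma frobeniusNormSq_zero : frobeniusNormSq (0 : Matrix m n ℂ) = 0 := by
  simp [frobeniusNormSq, rowNormSq]

@[simp]
lemma frobeniusNormSq_one [DecidableEq n] :
    frobeniusNormSq (1 : Matrix n n ℂ) = Fintype.card n := by
  simp [frobeniusNormSq, rowNormSq, one_apply, apply_ite]

lemma frobeniusNormSq_fromBlocks [Fintype l] [Fintype o] (A : Matrix n l ℂ) (B : Matrix n m ℂ)
    (C : Matrix o l ℂ) (D : Matrix o m ℂ) :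
    frobeniusNormSq (fromBlocks A B C D) =
      frobeniusNormSq A + frobeniusNormSq B + frobeniusNormSq C + frobeniusNormSq D := by
  simp only [frobeniusNormSq, rowNormSq, Fintype.sum_sum_type, fromBlocks_apply₁₁,
    fromBlocks_apply₁₂, fromBlocks_apply₂₁, fromBlocks_apply₂₂, Finset.sum_add_distrib]
  ring

lemma frobeniusNormSq_diagonal_mul [DecidableEq m] (d : m → ℝ) (A : Matrix m n ℂ) :
    frobeniusNormSq (diagonal (fun k => (d k : ℂ)) * A) = ∑ k, d k ^ 2 * rowNormSq A k := by
  simp only [frobeniusNormSq, rowNormSq, diagonal_mul, norm_mul, Complex.norm_real,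
    Real.norm_eq_abs, mul_pow, sq_abs, Finset.mul_sum]

lemma sum_normSq_diag_le_frobeniusNormSq (A : Matrix n n ℂ) :
    ∑ i, ‖A i i‖ ^ 2 ≤ frobeniusNormSq A :=
  Finset.sum_le_sum fun i _ =>
    Finset.single_le_sum (f := fun j => ‖A i j‖ ^ 2) (fun _ _ => sq_nonneg _) (Finset.mem_univ i)

end Frobenius

lemma re_det_conjTranspose_mul_self {n : Type*} [Fintype n] [DecidableEq n]
    (J : Matrix n n ℂ) : (Jᴴ * J).det.re = ‖J.det‖ ^ 2 := by
  rw [det_mul, det_conjTranspose, mul_comm]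
  exact_mod_cast congrArg Complex.re (Complex.mul_conj' J.det)

lemma Itilde_eq {n : Type*} [Fintype n] [DecidableEq n] (La J : Matrix n n ℂ) :
    Itilde La J = Real.log (‖J.det‖ ^ 2) - frobeniusNormSq (J * La⁻¹) := by
  rw [Itilde, re_det_conjTranspose_mul_self]
  rfl

lemma log_sq_sub_sq_mul_le {c d : ℝ} (hc : 0 < c) (hd : d ≠ 0) :
    Real.log (d ^ 2) - d ^ 2 * c ≤ Real.log c⁻¹ - 1 := by
  have hd2 : 0 < d ^ 2 := by positivity
  have h := Real.log_le_sub_one_of_pos (mul_pos hd2 hc)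
  rw [Real.log_mul hd2.ne' hc.ne'] at h
  rw [Real.log_inv]
  linarith

lemma log_normSq_det_sub_frobeniusNormSq_le {n : Type*} [Fintype n] [DecidableEq n]
    [LinearOrder n] {T : Matrix n n ℂ} (hT : T.IsLowerTriangular) (hdet : T.det ≠ 0) :
    Real.log (‖T.det‖ ^ 2) - frobeniusNormSq T ≤ -Fintype.card n := by
  rw [det_of_isLowerTriangular T hT] at hdet ⊢
  have hdiag : ∀ i, T i i ≠ 0 := fun i => Finset.prod_ne_zero_iff.mp hdet i (Finset.mem_univ i)
  rw [norm_prod, ← Finset.prod_pow,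
    Real.log_prod fun i _ => pow_ne_zero 2 (norm_ne_zero_iff.mpr (hdiag i))]
  have hlog : ∑ i, Real.log (‖T i i‖ ^ 2) ≤ ∑ i, (‖T i i‖ ^ 2 - 1) :=
    Finset.sum_le_sum fun i _ =>
      Real.log_le_sub_one_of_pos (pow_pos (norm_pos_iff.mpr (hdiag i)) 2)
  have := sum_normSq_diag_le_frobeniusNormSq T
  simp only [Finset.sum_sub_distrib, Finset.sum_const, Finset.card_univ, nsmul_eq_mul,
    mul_one] at hlog
  linarith

section Punctured

variable {ι κ : Type*} [Fintype ι] [Fintype κ] [DecidableEq ι] [DecidableEq κ]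

lemma log_normSq_det_fromBlocks_diagonal {J1 : Matrix ι ι ℂ} (J2 : Matrix κ ι ℂ) {d : κ → ℝ}
    (hJ1 : J1.det ≠ 0) (hd : ∀ k, d k ≠ 0) :
    Real.log (‖(fromBlocks J1 0 J2 (diagonal fun k => (d k : ℂ))).det‖ ^ 2) =
      Real.log (‖J1.det‖ ^ 2) + ∑ k, Real.log (d k ^ 2) := by
  rw [det_fromBlocks_zero₁₂, det_diagonal, norm_mul, mul_pow, norm_prod, ← Finset.prod_pow,
    Real.log_mul (by positivity) (Finset.prod_ne_zero_iff.mpr fun k _ => by simpa using hd k),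
    Real.log_prod fun k _ => by simpa using hd k]
  simp only [Complex.norm_real, Real.norm_eq_abs, sq_abs]

lemma Itilde_fromBlocks {P : Matrix ι ι ℂ} {S : Matrix κ κ ℂ} (R : Matrix κ ι ℂ)
    (hP : IsUnit P) (hS : IsUnit S) {J1 : Matrix ι ι ℂ} (J2 : Matrix κ ι ℂ) {d : κ → ℝ}
    (hJ1 : J1.det ≠ 0) (hd : ∀ k, d k ≠ 0) :
    Itilde (fromBlocks P 0 R S) (fromBlocks J1 0 J2 (diagonal fun k => (d k : ℂ))) =
      (Real.log (‖J1.det‖ ^ 2) - frobeniusNormSq (J1 * P⁻¹))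
        + ∑ k, (Real.log (d k ^ 2) - d k ^ 2 * rowNormSq S⁻¹ k)
        - frobeniusNormSq (J2 * P⁻¹ - diagonal (fun k => (d k : ℂ)) * S⁻¹ * R * P⁻¹) := by
  have hinv : (fromBlocks P 0 R S)⁻¹ = fromBlocks P⁻¹ 0 (-(S⁻¹ * R * P⁻¹)) S⁻¹ :=
    inv_fromBlocks_zero₁₂_of_isUnit_iff P R S (iff_of_true hP hS)
  rw [Itilde_eq, log_normSq_det_fromBlocks_diagonal J2 hJ1 hd, hinv, fromBlocks_multiply,
    frobeniusNormSq_fromBlocks]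
  simp only [Matrix.mul_zero, Matrix.zero_mul, add_zero, zero_add, frobeniusNormSq_zero,
    Matrix.mul_neg, ← sub_eq_add_neg, sub_zero, Matrix.mul_assoc, frobeniusNormSq_diagonal_mul,
    Finset.sum_sub_distrib]
  ring

lemma Omega_eq_diagonal (S : Matrix κ κ ℂ) :
    Omega S = diagonal fun k => (((rowNormSq S⁻¹ k).sqrt⁻¹ : ℝ) : ℂ) :=
  rfl

lemma isUnit_Omega {S : Matrix κ κ ℂ} (hS : IsUnit S) : IsUnit (Omega S) := by
  have hc := rowNormSq_pos_of_isUnit (isUnit_nonsing_inv_iff.mpr hS)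
  rw [Omega_eq_diagonal, isUnit_diagonal, Pi.isUnit_iff]
  exact fun k => (Complex.ofReal_ne_zero.mpr (by have := hc k; positivity)).isUnit

lemma re_det_Omega_sq (S : Matrix κ κ ℂ) :
    (Omega S ^ 2).det.re = ∏ k, (rowNormSq S⁻¹ k)⁻¹ := by
  simp_rw [Omega_eq_diagonal, sq, diagonal_mul_diagonal, det_diagonal, ← Complex.ofReal_mul,
    ← mul_inv, Real.mul_self_sqrt (rowNormSq_nonneg _ _), ← Complex.ofReal_prod,
    Complex.ofReal_re]

lemma Itilde_fromBlocks_Omega {P : Matrix ι ι ℂ} {S : Matrix κ κ ℂ} (R : Matrix κ ι ℂ)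
    (hP : IsUnit P) (hS : IsUnit S) :
    Itilde (fromBlocks P 0 R S) (fromBlocks P 0 (Omega S * S⁻¹ * R) (Omega S)) =
      Real.log (‖P.det‖ ^ 2) - Fintype.card ι
        + ∑ k, (Real.log (rowNormSq S⁻¹ k)⁻¹ - 1) := by
  have hc := rowNormSq_pos_of_isUnit (isUnit_nonsing_inv_iff.mpr hS)
  have hPdet := (isUnit_iff_isUnit_det P).mp hP
  have hω : ∀ k, (rowNormSq S⁻¹ k).sqrt⁻¹ ^ 2 = (rowNormSq S⁻¹ k)⁻¹ := fun k => by
    rw [inv_pow, Real.sq_sqrt (hc k).le]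
  rw [Omega_eq_diagonal, Itilde_fromBlocks R hP hS _ hPdet.ne_zero
    fun k => by have := hc k; positivity, mul_nonsing_inv P hPdet, frobeniusNormSq_one,
    Matrix.mul_assoc, Matrix.mul_assoc, sub_self, frobeniusNormSq_zero]
  simp only [hω, inv_mul_cancel₀ (hc _).ne']
  ring

variable [LinearOrder ι]

lemma Itilde_fromBlocks_le {P : Matrix ι ι ℂ} {S : Matrix κ κ ℂ} (R : Matrix κ ι ℂ)
    (hPlow : P.IsLowerTriangular) (hP : IsUnit P) (hS : IsUnit S) {J1 : Matrix ι ι ℂ}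
    (J2 : Matrix κ ι ℂ) {d : κ → ℝ} (hJ1low : J1.IsLowerTriangular) (hJ1 : J1.det ≠ 0)
    (hd : ∀ k, d k ≠ 0) :
    Itilde (fromBlocks P 0 R S) (fromBlocks J1 0 J2 (diagonal fun k => (d k : ℂ))) ≤
      Real.log (‖P.det‖ ^ 2) - Fintype.card ι
        + ∑ k, (Real.log (rowNormSq S⁻¹ k)⁻¹ - 1) := by
  have hPdet := (isUnit_iff_isUnit_det P).mp hP
  set T := J1 * P⁻¹
  have hTlow : T.IsLowerTriangular := by
    obtain ⟨_⟩ := hP.nonempty_invertible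
    exact hJ1low.mul (blockTriangular_inv_of_blockTriangular hPlow)
  have hJ1T : J1.det = T.det * P.det := by
    rw [← det_mul, nonsing_inv_mul_cancel_right P J1 hPdet]
  have hTdet : T.det ≠ 0 := left_ne_zero_of_mul (hJ1T ▸ hJ1)
  have hblock : Real.log (‖J1.det‖ ^ 2) - frobeniusNormSq T ≤
      Real.log (‖P.det‖ ^ 2) - Fintype.card ι := by
    rw [hJ1T, norm_mul, mul_pow, Real.log_mul (pow_ne_zero 2 (norm_ne_zero_iff.mpr hTdet))
      (pow_ne_zero 2 (norm_ne_zero_iff.mpr hPdet.ne_zero))]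
    have h := log_normSq_det_sub_frobeniusNormSq_le hTlow hTdet
    linarith
  have hdiag : ∑ k, (Real.log (d k ^ 2) - d k ^ 2 * rowNormSq S⁻¹ k) ≤
      ∑ k, (Real.log (rowNormSq S⁻¹ k)⁻¹ - 1) :=
    Finset.sum_le_sum fun k _ =>
      log_sq_sub_sq_mul_le (rowNormSq_pos_of_isUnit (isUnit_nonsing_inv_iff.mpr hS) k) (hd k)
  rw [Itilde_fromBlocks R hP hS J2 hJ1 hd]
  linarith [frobeniusNormSq_nonneg (J2 * P⁻¹ - diagonal (fun k => (d k : ℂ)) * S⁻¹ * R * P⁻¹)]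

end Punctured

theorem punctured_optimum_general (ν m : ℕ)
    (P : Matrix (Fin ν) (Fin ν) ℂ) (R : Matrix (Fin m) (Fin ν) ℂ)
    (S : Matrix (Fin m) (Fin m) ℂ)
    (hPlow : ∀ i j : Fin ν, i < j → P i j = 0) (hPunit : IsUnit P)
    (hSunit : IsUnit S)
    (La Jopt : Matrix (Fin ν ⊕ Fin m) (Fin ν ⊕ Fin m) ℂ)
    (hLa : La = Matrix.fromBlocks P 0 R S)
    (hJopt : Jopt = Matrix.fromBlocks P 0 (Omega S * S⁻¹ * R) (Omega S)) :
    IsUnit Jopt ∧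
    (∀ (J1 : Matrix (Fin ν) (Fin ν) ℂ) (J2 : Matrix (Fin m) (Fin ν) ℂ) (J3 : Fin m → ℝ),
      (∀ i j : Fin ν, i < j → J1 i j = 0) →
      (∀ J : Matrix (Fin ν ⊕ Fin m) (Fin ν ⊕ Fin m) ℂ,
        J = Matrix.fromBlocks J1 0 J2 (Matrix.diagonal fun k => ((J3 k : ℝ) : ℂ)) →
        IsUnit J → Itilde La J ≤ Itilde La Jopt)) ∧
    Itilde La Jopt =
      Real.log (Pᴴ * P).det.re + Real.log ((Omega S ^ 2).det.re) - ((ν + m : ℕ) : ℝ) := by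
  subst hLa hJopt
  have hopt := Itilde_fromBlocks_Omega R hPunit hSunit
  refine ⟨isUnit_fromBlocks_zero₁₂.mpr ⟨hPunit, isUnit_Omega hSunit⟩, ?_, ?_⟩
  · rintro J1 J2 J3 hJ1low J rfl hJ
    obtain ⟨hJ1, hJ3⟩ := isUnit_fromBlocks_zero₁₂.mp hJ
    rw [hopt]
    exact Itilde_fromBlocks_le R (fun i j h => hPlow i j h) hPunit hSunit J2
      (fun i j h => hJ1low i j h) ((isUnit_iff_isUnit_det J1).mp hJ1).ne_zero
      fun k => Complex.ofReal_ne_zero.mp ((Pi.isUnit_iff.mp (isUnit_diagonal.mp hJ3)) k).ne_zero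
  · have hc := rowNormSq_pos_of_isUnit (isUnit_nonsing_inv_iff.mpr hSunit)
    rw [hopt, re_det_conjTranspose_mul_self, re_det_Omega_sq,
      Real.log_prod fun k _ => (inv_pos.mpr (hc k)).ne', Finset.sum_sub_distrib]
    simp only [Finset.sum_const, Finset.card_univ, Fintype.card_fin, nsmul_eq_mul, mul_one]
    push_cast
    ring

/-- **Optimality of the punctured augmented matrix.** With `N = ν + m` (`ν, m ≥ 1`),
`L_a = [[P,0],[R,S]]` where `P`, `S` are lower-triangular and invertible, and
`J_opt = [[P,0],[Ω(S)S⁻¹R, Ω(S)]]`: `J_opt` is invertible, every invertible `J` of the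
punctured form `[[J₁,0],[J₂,J₃]]` (with `J₁` lower-triangular, `J₂` arbitrary, `J₃` real
diagonal) satisfies `Ĩ(J) ≤ Ĩ(J_opt)`, and
`Ĩ(J_opt) = ln det(PᴴP) + ln det(Ω(S)²) − N`. -/
theorem punctured_optimum (ν m : ℕ) (hν : 1 ≤ ν) (hm : 1 ≤ m)
    (P : Matrix (Fin ν) (Fin ν) ℂ) (R : Matrix (Fin m) (Fin ν) ℂ)
    (S : Matrix (Fin m) (Fin m) ℂ)
    (hPlow : ∀ i j : Fin ν, i < j → P i j = 0) (hPunit : IsUnit P)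
    (hSlow : ∀ i j : Fin m, i < j → S i j = 0) (hSunit : IsUnit S)
    (La Jopt : Matrix (Fin ν ⊕ Fin m) (Fin ν ⊕ Fin m) ℂ)
    (hLa : La = Matrix.fromBlocks P 0 R S)
    (hJopt : Jopt = Matrix.fromBlocks P 0 (Omega S * S⁻¹ * R) (Omega S)) :
    IsUnit Jopt ∧
    (∀ (J1 : Matrix (Fin ν) (Fin ν) ℂ) (J2 : Matrix (Fin m) (Fin ν) ℂ) (J3 : Fin m → ℝ),
      (∀ i j : Fin ν, i < j → J1 i j = 0) →
      (∀ J : Matrix (Fin ν ⊕ Fin m) (Fin ν ⊕ Fin m) ℂ,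
        J = Matrix.fromBlocks J1 0 J2 (Matrix.diagonal fun k => ((J3 k : ℝ) : ℂ)) →
        IsUnit J → Itilde La J ≤ Itilde La Jopt)) ∧
    Itilde La Jopt =
      Real.log (Pᴴ * P).det.re + Real.log ((Omega S ^ 2).det.re) - ((ν + m : ℕ) : ℝ) :=
  punctured_optimum_general ν m P R S hPlow hPunit hSunit La Jopt hLa hJopt
end
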